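/- arXiv:math/0105223 — 3 statements merged into one kernel-verified Lean document; each statement's English description precedes it below -/
import Mathlib

section
/- Integration by parts in canonical form: for any jet function B and multi-index σ with |σ| = k ≥ 1, Γ^μ_σ B ∧ Dx is equal, modulo the image of the horizontal differential D: Ω^{1,m−1} → Ω^{1,m}, to Γ^μ_{σ'} (−D_{a}B) ∧ Dx where σ = a σ'. Consequently every class in Ω^{1,m}/D(Ω^{1,m−1}) has a representative of the form Σ_μ Γ^μ B̃_μ ∧ Dx with B̃_μ = Σ_σ (−1)^{|σ|} D_σ B^σ_μ for ω = Σ Γ^μ_σ B^σ_μ ∧ Dx. -/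
open scoped BigOperators

/-- Multi-indices over `Fin m`, recorded as exponent vectors (so automatically
symmetric in the order of the indices). -/
abbrev MIdx (m : ℕ) := Fin m → ℕ

/-- Points of the infinite jet space of the trivial bundle `ℝ^m × ℝ^n → ℝ^m`:
base coordinates `x^a` together with all jet coordinates `φ^μ_σ`. -/
abbrev Jet (m n : ℕ) := (Fin m → ℝ) × ((Fin n × MIdx m) → ℝ)

/-- Names of the coordinates on jet space: either a base coordinate `x^a`
or a jet coordinate `φ^μ_σ`. -/
abbrev JCoord (m n : ℕ) := Fin m ⊕ (Fin n × MIdx m)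

variable {m n : ℕ}

/-- Evaluate a coordinate at a point of jet space. -/
def jeval (p : Jet m n) : JCoord m n → ℝ
  | .inl a => p.1 a
  | .inr c => p.2 c

/-- Update one coordinate of a point of jet space. -/
def jupdate (p : Jet m n) : JCoord m n → ℝ → Jet m n
  | .inl a, t => (Function.update p.1 a t, p.2)
  | .inr c, t => (p.1, Function.update p.2 c t)

/-- Partial derivative of a function on jet space with respect to one coordinate. -/
noncomputable def pd (c : JCoord m n) (f : Jet m n → ℝ) (p : Jet m n) : ℝ :=
  deriv (fun t => f (jupdate p c t)) (jeval p c)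

/-- The total derivative `D_a = ∂/∂x^a + Σ_{μ,σ} φ^μ_{aσ} ∂/∂φ^μ_σ`. -/
noncomputable def totalD (a : Fin m) (f : Jet m n → ℝ) (p : Jet m n) : ℝ :=
  pd (.inl a) f p +
    ∑' c : Fin n × MIdx m, p.2 (c.1, c.2 + Pi.single a 1) * pd (.inr c) f p

/-- A jet function: a smooth function depending on finitely many of the
coordinates `x^a, φ^μ_σ` (finite order). -/
def IsJetFun (f : Jet m n → ℝ) : Prop :=
  ∃ (N : ℕ) (c : Fin N → JCoord m n) (F : (Fin N → ℝ) → ℝ),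
    ContDiff ℝ (⊤ : ℕ∞) F ∧ ∀ p, f p = F (fun i => jeval p (c i))

/-- The iterated total derivative `D_σ = D_1^{σ 1} ∘ … ∘ D_m^{σ m}`
(the order is irrelevant since total derivatives commute on jet functions). -/
noncomputable def Dmulti {m n : ℕ} (σ : MIdx m) (f : Jet m n → ℝ) : Jet m n → ℝ :=
  (List.finRange m).foldr (fun a g => (totalD a)^[σ a] g) f

/-- The total degree `|σ|` of a multi-index. -/
def mdeg {m : ℕ} (σ : MIdx m) : ℕ := ∑ a, σ a

/-- The Euler operator (variational derivative)
`E_μ(L) = Σ_σ (−1)^{|σ|} D_σ (∂L/∂φ^μ_σ)`. -/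
noncomputable def euler {m n : ℕ} (μ : Fin n) (L : Jet m n → ℝ) (p : Jet m n) : ℝ :=
  ∑' σ : MIdx m, (-1 : ℝ) ^ mdeg σ * Dmulti σ (pd (Sum.inr (μ, σ)) L) p

/-- A form `ω ∈ Ω^{1,m}`, `ω = Σ Γ^μ_σ B^σ_μ ∧ Dx`, is recorded by its
coefficient family `B`. Similarly `τ ∈ Ω^{1,m−1}`, `τ = Σ Γ^μ_σ C^{σ,a}_μ ∧ Dx_a`,
is recorded by the family `C`. This is the coefficient family of the horizontal
differential `Dτ ∈ Ω^{1,m}` (computed from `D Γ^μ_σ = dx^a Γ^μ_{aσ}`,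
`dx^a ∧ Dx_a = Dx`). -/
noncomputable def Dimg {m n : ℕ} (C : (Fin n × MIdx m) → Fin m → Jet m n → ℝ)
    (c : Fin n × MIdx m) (p : Jet m n) : ℝ :=
  ∑ a : Fin m,
    (-(if 1 ≤ c.2 a then C (c.1, c.2 - Pi.single a 1) a p else 0)
      - totalD a (C c a) p)

section AuxIBP

variable {m n : ℕ}

lemma jeval_jupdate (p : Jet m n) (d e : JCoord m n) (t : ℝ) :
    jeval (jupdate p d t) e = if e = d then t else jeval p e := by
  cases d with
  | inl a => cases e with
    | inl b => simp [jeval, jupdate, Function.update_apply]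
    | inr c => simp [jeval, jupdate]
  | inr c => cases e with
    | inl b => simp [jeval, jupdate]
    | inr c' => simp [jeval, jupdate, Function.update_apply]

lemma hasDerivAt_comp_jupdate {N : ℕ} (c : Fin N → JCoord m n)
    (F : (Fin N → ℝ) → ℝ) (hF : ContDiff ℝ (⊤ : ℕ∞) F) (d : JCoord m n) (p : Jet m n) :
    HasDerivAt (fun t => F (fun i => jeval (jupdate p d t) (c i)))
      (fderiv ℝ F (fun i => jeval p (c i)) (fun i => if c i = d then 1 else 0))
      (jeval p d) := by
  classical
  set w : Fin N → ℝ := fun i => if c i = d then 1 else 0 with hw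
  set A : Fin N → ℝ := fun i => if c i = d then 0 else jeval p (c i) with hA
  have hline : ∀ t : ℝ, (fun i => jeval (jupdate p d t) (c i)) = A + t • w := by
    intro t
    funext i
    simp only [jeval_jupdate, hA, hw, Pi.add_apply, Pi.smul_apply, smul_eq_mul]
    split_ifs <;> ring
  have h1 : HasDerivAt (fun t : ℝ => A + t • w) w (jeval p d) := by
    simpa using ((hasDerivAt_id (jeval p d)).smul_const w).const_add A
  have h2 : HasDerivAt (fun t : ℝ => F (A + t • w))
      (fderiv ℝ F (A + (jeval p d) • w) w) (jeval p d) :=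
    ((hF.differentiable (by simp) (A + (jeval p d) • w)).hasFDerivAt).comp_hasDerivAt _ h1
  have hAx : A + (jeval p d) • w = fun i => jeval p (c i) := by
    funext i
    simp only [hA, hw, Pi.add_apply, Pi.smul_apply, smul_eq_mul]
    split_ifs with h
    · rw [h]; ring
    · ring
  rw [hAx] at h2
  have : (fun t => F (fun i => jeval (jupdate p d t) (c i)))
      = fun t : ℝ => F (A + t • w) := by
    funext t; rw [hline]
  rw [this]
  exact h2

lemma pd_rep {N : ℕ} {c : Fin N → JCoord m n} {F : (Fin N → ℝ) → ℝ}
    {f : Jet m n → ℝ} (hF : ContDiff ℝ (⊤ : ℕ∞) F)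
    (hf : ∀ q, f q = F (fun i => jeval q (c i))) (d : JCoord m n) (p : Jet m n) :
    pd d f p = fderiv ℝ F (fun i => jeval p (c i)) (fun i => if c i = d then 1 else 0) := by
  have : (fun t => f (jupdate p d t))
      = fun t => F (fun i => jeval (jupdate p d t) (c i)) := by
    funext t; exact hf _
  rw [pd, this]
  exact (hasDerivAt_comp_jupdate c F hF d p).deriv

lemma IsJetFun.hasDerivAt {f : Jet m n → ℝ} (hf : IsJetFun f) (d : JCoord m n) (p : Jet m n) :
    HasDerivAt (fun t => f (jupdate p d t)) (pd d f p) (jeval p d) := by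
  obtain ⟨N, c, F, hF, hrep⟩ := hf
  have heq : (fun t => f (jupdate p d t))
      = fun t => F (fun i => jeval (jupdate p d t) (c i)) := by
    funext t; exact hrep _
  rw [pd_rep hF hrep d p, heq]
  exact hasDerivAt_comp_jupdate c F hF d p

lemma pd_of_not_mem {N : ℕ} {c : Fin N → JCoord m n} {F : (Fin N → ℝ) → ℝ}
    {f : Jet m n → ℝ} (hF : ContDiff ℝ (⊤ : ℕ∞) F)
    (hf : ∀ q, f q = F (fun i => jeval q (c i))) {d : JCoord m n}
    (hd : d ∉ Set.range c) (p : Jet m n) : pd d f p = 0 := by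
  rw [pd_rep hF hf d p]
  have : (fun i => if c i = d then (1:ℝ) else 0) = 0 := by
    funext i
    simp only [Pi.zero_apply, ite_eq_right_iff]
    intro h; exact absurd ⟨i, h⟩ hd
  rw [this, map_zero]

lemma isJetFun_congr {f g : Jet m n → ℝ} (h : ∀ p, f p = g p) (hg : IsJetFun g) :
    IsJetFun f := by
  obtain ⟨N, c, F, hF, hrep⟩ := hg
  exact ⟨N, c, F, hF, fun p => (h p).trans (hrep p)⟩

lemma isJetFun_const (r : ℝ) : IsJetFun (fun _ : Jet m n => r) :=
  ⟨0, Fin.elim0, fun _ => r, contDiff_const, fun _ => rfl⟩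

lemma isJetFun_zero : IsJetFun (fun _ : Jet m n => (0:ℝ)) := isJetFun_const 0

lemma isJetFun_coord (d : JCoord m n) : IsJetFun (fun p => jeval p d) :=
  ⟨1, fun _ => d, fun y => y 0, (ContinuousLinearMap.proj (R := ℝ) (φ := fun _ : Fin 1 => ℝ) (0 : Fin 1)).contDiff,
    fun _ => rfl⟩

lemma isJetFun_add {f g : Jet m n → ℝ} (hf : IsJetFun f) (hg : IsJetFun g) :
    IsJetFun (fun p => f p + g p) := by
  obtain ⟨N1, c1, F1, hF1, h1⟩ := hf
  obtain ⟨N2, c2, F2, hF2, h2⟩ := hg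
  refine ⟨N1 + N2, Fin.append c1 c2,
    fun y => F1 (fun i => y (Fin.castAdd N2 i)) + F2 (fun j => y (Fin.natAdd N1 j)), ?_, ?_⟩
  · exact (hF1.comp (contDiff_pi.2 fun i =>
      (ContinuousLinearMap.proj (R := ℝ) (φ := fun _ : Fin (N1+N2) => ℝ) (Fin.castAdd N2 i)).contDiff)).add
      (hF2.comp (contDiff_pi.2 fun j =>
      (ContinuousLinearMap.proj (R := ℝ) (φ := fun _ : Fin (N1+N2) => ℝ) (Fin.natAdd N1 j)).contDiff))
  · intro p
    simp only [Fin.append_left, Fin.append_right]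
    rw [h1, h2]

lemma isJetFun_mul {f g : Jet m n → ℝ} (hf : IsJetFun f) (hg : IsJetFun g) :
    IsJetFun (fun p => f p * g p) := by
  obtain ⟨N1, c1, F1, hF1, h1⟩ := hf
  obtain ⟨N2, c2, F2, hF2, h2⟩ := hg
  refine ⟨N1 + N2, Fin.append c1 c2,
    fun y => F1 (fun i => y (Fin.castAdd N2 i)) * F2 (fun j => y (Fin.natAdd N1 j)), ?_, ?_⟩
  · exact (hF1.comp (contDiff_pi.2 fun i =>
      (ContinuousLinearMap.proj (R := ℝ) (φ := fun _ : Fin (N1+N2) => ℝ) (Fin.castAdd N2 i)).contDiff)).mul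
      (hF2.comp (contDiff_pi.2 fun j =>
      (ContinuousLinearMap.proj (R := ℝ) (φ := fun _ : Fin (N1+N2) => ℝ) (Fin.natAdd N1 j)).contDiff))
  · intro p
    simp only [Fin.append_left, Fin.append_right]
    rw [h1, h2]

lemma isJetFun_neg {f : Jet m n → ℝ} (hf : IsJetFun f) : IsJetFun (fun p => -(f p)) := by
  obtain ⟨N, c, F, hF, h⟩ := hf
  exact ⟨N, c, fun y => -(F y), hF.neg, fun p => by simp only [h]⟩

lemma isJetFun_sum {ι : Type*} (s : Finset ι) (f : ι → Jet m n → ℝ)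
    (h : ∀ i ∈ s, IsJetFun (f i)) : IsJetFun (fun p => ∑ i ∈ s, f i p) := by
  classical
  induction s using Finset.induction_on with
  | empty => exact isJetFun_congr (by simp) isJetFun_zero
  | insert x s' hx ih =>
    refine isJetFun_congr (fun p => Finset.sum_insert hx)
      (isJetFun_add (h x (Finset.mem_insert_self x s')) (ih fun i hi => h i (Finset.mem_insert_of_mem hi)))

lemma IsJetFun.pd {f : Jet m n → ℝ} (hf : IsJetFun f) (d : JCoord m n) :
    IsJetFun (pd d f) := by
  obtain ⟨N, c, F, hF, hrep⟩ := hf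
  classical
  refine ⟨N, c, fun y => fderiv ℝ F y (fun i => if c i = d then 1 else 0), ?_, ?_⟩
  · exact (hF.fderiv_right (by simp)).clm_apply contDiff_const
  · intro p; exact pd_rep hF hrep d p

lemma pd_const (r : ℝ) (d : JCoord m n) (p : Jet m n) :
    pd d (fun _ => r) p = 0 := by
  simp [pd]

lemma pd_neg (f : Jet m n → ℝ) (d : JCoord m n) (p : Jet m n) :
    pd d (fun q => -(f q)) p = -(pd d f p) := by
  simp only [pd]
  exact deriv.neg

lemma pd_add {f g : Jet m n → ℝ} (hf : IsJetFun f) (hg : IsJetFun g)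
    (d : JCoord m n) (p : Jet m n) :
    pd d (fun q => f q + g q) p = pd d f p + pd d g p :=
  ((hf.hasDerivAt d p).add (hg.hasDerivAt d p)).deriv

lemma totalD_support {f : Jet m n → ℝ} (hf : IsJetFun f) :
    ∃ T : Finset (Fin n × MIdx m), ∀ (c' : Fin n × MIdx m), c' ∉ T →
      ∀ p, pd (.inr c') f p = 0 := by
  classical
  obtain ⟨N, c, F, hF, hrep⟩ := hf
  have hfin : ({c' : Fin n × MIdx m | Sum.inr c' ∈ Set.range c}).Finite :=
    (Set.finite_range c).preimage (Sum.inr_injective.injOn)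
  refine ⟨hfin.toFinset, fun c' hc' p => ?_⟩
  rw [Set.Finite.mem_toFinset] at hc'
  exact pd_of_not_mem hF hrep hc' p

lemma summable_totalD_term {f : Jet m n → ℝ} (hf : IsJetFun f) (a : Fin m) (p : Jet m n) :
    Summable (fun c' : Fin n × MIdx m =>
      p.2 (c'.1, c'.2 + Pi.single a 1) * pd (.inr c') f p) := by
  obtain ⟨T, hT⟩ := totalD_support hf
  exact summable_of_ne_finset_zero (s := T) (fun c' hc' => by rw [hT c' hc' p, mul_zero])

lemma totalD_const (r : ℝ) (a : Fin m) (p : Jet m n) :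
    totalD a (fun _ => r) p = 0 := by
  simp [totalD, pd_const]

lemma totalD_zero (a : Fin m) (p : Jet m n) :
    totalD a (fun _ => (0:ℝ)) p = 0 := totalD_const 0 a p

lemma totalD_neg (f : Jet m n → ℝ) (a : Fin m) (p : Jet m n) :
    totalD a (fun q => -(f q)) p = -(totalD a f p) := by
  simp only [totalD, pd_neg, mul_neg]
  rw [tsum_neg]
  ring

lemma totalD_add {f g : Jet m n → ℝ} (hf : IsJetFun f) (hg : IsJetFun g)
    (a : Fin m) (p : Jet m n) :
    totalD a (fun q => f q + g q) p = totalD a f p + totalD a g p := by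
  simp only [totalD]
  have h1 : ∀ c' : Fin n × MIdx m,
      p.2 (c'.1, c'.2 + Pi.single a 1) * pd (.inr c') (fun q => f q + g q) p
      = p.2 (c'.1, c'.2 + Pi.single a 1) * pd (.inr c') f p
        + p.2 (c'.1, c'.2 + Pi.single a 1) * pd (.inr c') g p := by
    intro c'; rw [pd_add hf hg, mul_add]
  rw [pd_add hf hg, tsum_congr h1,
    (summable_totalD_term hf a p).tsum_add (summable_totalD_term hg a p)]
  ring

lemma IsJetFun.totalD {f : Jet m n → ℝ} (hf : IsJetFun f) (a : Fin m) :
    IsJetFun (_root_.totalD a f) := by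
  classical
  obtain ⟨T, hT⟩ := totalD_support hf
  have heq : ∀ p, _root_.totalD a f p = _root_.pd (Sum.inl a) f p
      + ∑ c' ∈ T, jeval p (Sum.inr (c'.1, c'.2 + Pi.single a 1)) * _root_.pd (Sum.inr c') f p := by
    intro p
    rw [_root_.totalD, tsum_eq_sum (s := T) (fun c' hc' => by rw [hT c' hc' p, mul_zero])]
    rfl
  exact isJetFun_congr heq (isJetFun_add (hf.pd _)
    (isJetFun_sum T _ (fun c' _ => isJetFun_mul (isJetFun_coord _) (hf.pd _))))

lemma iterate_totalD_zero (a : Fin m) (k : ℕ) :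
    (totalD a)^[k] (fun _ : Jet m n => (0:ℝ)) = fun _ => (0:ℝ) := by
  induction k with
  | zero => rfl
  | succ k ih =>
    rw [Function.iterate_succ_apply]
    have : totalD a (fun _ : Jet m n => (0:ℝ)) = fun _ => (0:ℝ) :=
      funext fun p => totalD_zero a p
    rw [this, ih]

lemma iterate_totalD_neg (a : Fin m) (k : ℕ) (f : Jet m n → ℝ) :
    (totalD a)^[k] (fun q => -(f q)) = fun q => -((totalD a)^[k] f q) := by
  induction k generalizing f with
  | zero => rfl
  | succ k ih =>
    rw [Function.iterate_succ_apply, Function.iterate_succ_apply]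
    have : totalD a (fun q => -(f q)) = fun q => -(totalD a f q) :=
      funext fun p => totalD_neg f a p
    rw [this, ih]

lemma iterate_totalD_jet (a : Fin m) (k : ℕ) {f : Jet m n → ℝ} (hf : IsJetFun f) :
    IsJetFun ((totalD a)^[k] f) := by
  induction k generalizing f with
  | zero => exact hf
  | succ k ih =>
    rw [Function.iterate_succ_apply]
    exact ih (hf.totalD a)

lemma foldr_totalD_zero_fun (σ : MIdx m) :
    ∀ l : List (Fin m),
      l.foldr (fun a g => (totalD a)^[σ a] g) (fun _ : Jet m n => (0:ℝ)) = fun _ => 0 := by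
  intro l
  induction l with
  | nil => rfl
  | cons b t ih => rw [List.foldr_cons, ih, iterate_totalD_zero]

lemma Dmulti_zero_fun (σ : MIdx m) : Dmulti (n := n) σ (fun _ => (0:ℝ)) = fun _ => 0 :=
  foldr_totalD_zero_fun σ _

lemma foldr_totalD_neg (σ : MIdx m) (f : Jet m n → ℝ) :
    ∀ l : List (Fin m),
      l.foldr (fun a g => (totalD a)^[σ a] g) (fun q => -(f q))
        = fun q => -(l.foldr (fun a g => (totalD a)^[σ a] g) f q) := by
  intro l
  induction l generalizing f with
  | nil => rfl
  | cons b t ih => rw [List.foldr_cons, List.foldr_cons, ih, iterate_totalD_neg]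

lemma Dmulti_neg (σ : MIdx m) (f : Jet m n → ℝ) :
    Dmulti σ (fun q => -(f q)) = fun q => -(Dmulti σ f q) :=
  foldr_totalD_neg σ f _

lemma foldr_totalD_jet (σ : MIdx m) {f : Jet m n → ℝ} (hf : IsJetFun f) :
    ∀ l : List (Fin m), IsJetFun (l.foldr (fun a g => (totalD a)^[σ a] g) f) := by
  intro l
  induction l generalizing f with
  | nil => exact hf
  | cons b t ih => exact iterate_totalD_jet b (σ b) (ih hf)

lemma Dmulti_jet (σ : MIdx m) {f : Jet m n → ℝ} (hf : IsJetFun f) :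
    IsJetFun (Dmulti σ f) := foldr_totalD_jet σ hf _

lemma foldr_totalD_of_zero (σ : MIdx m) (f : Jet m n → ℝ) :
    ∀ l : List (Fin m), (∀ b ∈ l, σ b = 0) →
      l.foldr (fun a g => (totalD a)^[σ a] g) f = f := by
  intro l
  induction l with
  | nil => intro _; rfl
  | cons b t ih =>
    intro h
    rw [List.foldr_cons, ih (fun x hx => h x (List.mem_cons_of_mem b hx)),
      h b List.mem_cons_self, Function.iterate_zero_apply]

lemma Dmulti_of_mdeg_zero (σ : MIdx m) (hσ : σ = 0) (f : Jet m n → ℝ) :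
    Dmulti σ f = f := by
  apply foldr_totalD_of_zero
  intro b _
  rw [hσ]; rfl

lemma foldr_totalD_peel (σ : MIdx m) (a : Fin m) (hge : 1 ≤ σ a) (f : Jet m n → ℝ) :
    ∀ l : List (Fin m), l.Pairwise (· < ·) → a ∈ l → (∀ b ∈ l, a < b → σ b = 0) →
      l.foldr (fun b g => (totalD b)^[σ b] g) f
        = l.foldr (fun b g => (totalD b)^[((σ - Pi.single a 1 : MIdx m)) b] g) (totalD a f) := by
  intro l
  induction l with
  | nil => intro _ ha; exact absurd ha List.not_mem_nil
  | cons b t ih =>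
    intro hpw hmem hz
    rw [List.pairwise_cons] at hpw
    rcases List.mem_cons.1 hmem with hab | hat
    · -- a = b
      subst hab
      have htz : ∀ x ∈ t, σ x = 0 := fun x hx => hz x (List.mem_cons_of_mem a hx) (hpw.1 x hx)
      have htz' : ∀ x ∈ t, (σ - Pi.single a 1 : MIdx m) x = 0 := by
        intro x hx
        have hne : x ≠ a := ne_of_gt (hpw.1 x hx)
        rw [Pi.sub_apply, Pi.single_eq_of_ne hne, htz x hx]
        omega
      rw [List.foldr_cons, List.foldr_cons,
        foldr_totalD_of_zero σ f t htz, foldr_totalD_of_zero _ (totalD a f) t htz']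
      have hsa : (σ - Pi.single a 1 : MIdx m) a = σ a - 1 := by
        rw [Pi.sub_apply, Pi.single_eq_same]
      rw [hsa, ← Function.iterate_succ_apply]
      congr 1
      omega
    · -- a ∈ t
      have hba : b ≠ a := by
        rintro rfl
        exact lt_irrefl b (hpw.1 b hat)
      rw [List.foldr_cons, List.foldr_cons,
        ih hpw.2 hat (fun x hx hax => hz x (List.mem_cons_of_mem b hx) hax)]
      congr 1
      rw [Pi.sub_apply, Pi.single_eq_of_ne hba, Nat.sub_zero]

lemma Dmulti_peel (σ : MIdx m) (a : Fin m) (hge : 1 ≤ σ a)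
    (hmax : ∀ b, a < b → σ b = 0) (f : Jet m n → ℝ) :
    Dmulti σ f = Dmulti (σ - Pi.single a 1) (totalD a f) :=
  foldr_totalD_peel σ a hge f (List.finRange m) (List.pairwise_lt_finRange m)
    (List.mem_finRange a) (fun b _ => hmax b)

lemma Dimg_zero (c : Fin n × MIdx m) (p : Jet m n) :
    Dimg (fun _ _ => (fun _ => (0:ℝ))) c p = 0 := by
  rw [Dimg]
  apply Finset.sum_eq_zero
  intro a _
  rw [totalD_zero]
  simp

lemma Dimg_add {C1 C2 : (Fin n × MIdx m) → Fin m → Jet m n → ℝ}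
    (h1 : ∀ c b, IsJetFun (C1 c b)) (h2 : ∀ c b, IsJetFun (C2 c b))
    (c : Fin n × MIdx m) (p : Jet m n) :
    Dimg (fun c b p => C1 c b p + C2 c b p) c p = Dimg C1 c p + Dimg C2 c p := by
  simp only [Dimg, ← Finset.sum_add_distrib]
  apply Finset.sum_congr rfl
  intro a _
  rw [totalD_add (h1 c a) (h2 c a)]
  split_ifs <;> ring

lemma sub_single_inj {τ ρ : MIdx m} (a : Fin m) (h1 : 1 ≤ τ a) (h2 : 1 ≤ ρ a)
    (h : τ - Pi.single a 1 = ρ - Pi.single a 1) : τ = ρ := by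
  funext b
  have hb := congrFun h b
  by_cases hba : b = a
  · subst hba
    rw [Pi.sub_apply, Pi.sub_apply, Pi.single_eq_same] at hb
    omega
  · rw [Pi.sub_apply, Pi.sub_apply, Pi.single_eq_of_ne hba] at hb
    omega

lemma step1 {B : Jet m n → ℝ} (hB : IsJetFun B) (μ : Fin n) (σ : MIdx m) (a : Fin m)
    (ha : 1 ≤ σ a) :
    ∃ C : (Fin n × MIdx m) → Fin m → Jet m n → ℝ,
      (∀ c b, IsJetFun (C c b)) ∧
      {q : (Fin n × MIdx m) × Fin m | C q.1 q.2 ≠ 0}.Finite ∧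
      ∀ (c : Fin n × MIdx m) (p : Jet m n),
        (if c = (μ, σ) then B p else 0) -
          (if c = (μ, σ - Pi.single a 1) then -(totalD a B p) else 0) =
        Dimg C c p := by
  classical
  set σ' : MIdx m := σ - Pi.single a 1 with hσ'
  set C : (Fin n × MIdx m) → Fin m → Jet m n → ℝ :=
    fun c b => if c = (μ, σ') ∧ b = a then (fun p => -(B p)) else (fun _ => 0) with hC
  have hCne : ∀ (x : Fin n × MIdx m) (b : Fin m), b ≠ a → C x b = fun _ => 0 := by
    intro x b hb
    rw [hC]
    simp [hb]
  have hCa : ∀ (x : Fin n × MIdx m),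
      C x a = if x = (μ, σ') then (fun p => -(B p)) else fun _ => 0 := by
    intro x
    rw [hC]
    simp
  refine ⟨C, ?_, ?_, ?_⟩
  · intro c b
    rw [hC]
    dsimp only
    split_ifs
    · exact isJetFun_neg hB
    · exact isJetFun_zero
  · apply Set.Finite.subset (Set.finite_singleton ((μ, σ'), a))
    intro q hq
    simp only [Set.mem_setOf_eq] at hq
    by_contra hne
    apply hq
    have hcond : ¬(q.1 = (μ, σ') ∧ q.2 = a) := by
      intro h
      exact hne (by rw [Set.mem_singleton_iff]; exact Prod.ext h.1 h.2)
    rw [hC]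
    simp only [hcond, if_false]
    rfl
  · intro c p
    have hD : Dimg C c p =
        -(if 1 ≤ c.2 a then C (c.1, c.2 - Pi.single a 1) a p else 0)
          - totalD a (C c a) p := by
      rw [Dimg]
      apply Finset.sum_eq_single_of_mem a (Finset.mem_univ a)
      intro b _ hb
      rw [hCne (c.1, c.2 - Pi.single b 1) b hb, hCne c b hb, totalD_zero]
      simp
    rw [hD, hCa (c.1, c.2 - Pi.single a 1), hCa c]
    have htD : totalD a (if c = (μ, σ') then (fun p => -(B p)) else fun _ => (0:ℝ)) p
        = (if c = (μ, σ') then -(totalD a B p) else 0) := by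
      split_ifs with h
      · exact totalD_neg B a p
      · exact totalD_zero a p
    rw [htD]
    have hfst : -(if 1 ≤ c.2 a then
        (if (c.1, c.2 - Pi.single a 1) = (μ, σ') then (fun p => -(B p)) else fun _ => (0:ℝ)) p
        else 0) = (if c = (μ, σ) then B p else 0) := by
      by_cases hc : c = (μ, σ)
      · rw [hc]
        have h1 : 1 ≤ σ a := ha
        have h2 : ((μ, σ) : Fin n × MIdx m).2 = σ := rfl
        simp only [h2, h1, if_true]
        have h3 : ((((μ, σ) : Fin n × MIdx m).1, σ - Pi.single a 1) : Fin n × MIdx m)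
            = (μ, σ') := by rw [hσ']
        simp only [h3, if_true, neg_neg]
      · have h0 : ¬(1 ≤ c.2 a) ∨ ¬((c.1, c.2 - Pi.single a 1) = (μ, σ')) := by
          by_contra hcon
          push_neg at hcon
          obtain ⟨hg, hin⟩ := hcon
          apply hc
          have hc1 : c.1 = μ := (Prod.ext_iff.1 hin).1
          have hc2 : c.2 - Pi.single a 1 = σ - Pi.single a 1 := by
            have h := (Prod.ext_iff.1 hin).2
            simpa [hσ'] using h
          have : c.2 = σ := sub_single_inj a hg ha hc2
          exact Prod.ext hc1 this
        rcases h0 with hg | hin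
        · simp [hg, hc]
        · simp [hin, hc]
    rw [hfst]

lemma Dimg_congr {C C' : (Fin n × MIdx m) → Fin m → Jet m n → ℝ}
    (h : ∀ c b, C c b = C' c b) (c : Fin n × MIdx m) (p : Jet m n) :
    Dimg C c p = Dimg C' c p := by
  rw [Dimg, Dimg]
  apply Finset.sum_congr rfl
  intro a _
  rw [h (c.1, c.2 - Pi.single a 1) a, h c a]

lemma mdeg_sub_single {σ : MIdx m} {a : Fin m} (ha : 1 ≤ σ a) :
    mdeg (σ - Pi.single a 1) = mdeg σ - 1 := by
  classical
  have h1 : mdeg σ = σ a + ∑ b ∈ Finset.univ.erase a, σ b :=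
    (Finset.add_sum_erase Finset.univ σ (Finset.mem_univ a)).symm
  have h2 : mdeg (σ - Pi.single a 1)
      = (σ - Pi.single a 1 : MIdx m) a + ∑ b ∈ Finset.univ.erase a, (σ - Pi.single a 1 : MIdx m) b :=
    (Finset.add_sum_erase Finset.univ _ (Finset.mem_univ a)).symm
  have h3 : ∑ b ∈ Finset.univ.erase a, (σ - Pi.single a 1 : MIdx m) b
      = ∑ b ∈ Finset.univ.erase a, σ b := by
    apply Finset.sum_congr rfl
    intro b hb
    rw [Pi.sub_apply, Pi.single_eq_of_ne (Finset.ne_of_mem_erase hb), Nat.sub_zero]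
  have h4 : (σ - Pi.single a 1 : MIdx m) a = σ a - 1 := by
    rw [Pi.sub_apply, Pi.single_eq_same]
  omega

lemma reduce (μ : Fin n) : ∀ (k : ℕ) (σ : MIdx m), mdeg σ = k →
    ∀ B : Jet m n → ℝ, IsJetFun B →
    ∃ C : (Fin n × MIdx m) → Fin m → Jet m n → ℝ,
      (∀ c b, IsJetFun (C c b)) ∧
      {q : (Fin n × MIdx m) × Fin m | C q.1 q.2 ≠ 0}.Finite ∧
      ∀ (c : Fin n × MIdx m) (p : Jet m n),
        (if c = (μ, σ) then B p else 0) -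
          (if c = (μ, (0 : MIdx m)) then (-1:ℝ)^k * Dmulti σ B p else 0) =
        Dimg C c p := by
  intro k
  induction k with
  | zero =>
    intro σ hσ B hB
    have hσ0 : σ = 0 := by
      funext b
      have h : ∑ a, σ a = 0 := hσ
      exact Finset.sum_eq_zero_iff.mp h b (Finset.mem_univ b)
    subst hσ0
    refine ⟨fun _ _ => fun _ => 0, fun _ _ => isJetFun_zero, ?_, ?_⟩
    · apply Set.Finite.subset (Set.finite_empty)
      intro q hq
      exact absurd rfl hq
    · intro c p
      rw [Dimg_zero, Dmulti_of_mdeg_zero 0 rfl, pow_zero, one_mul, sub_self]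
  | succ k ih =>
    intro σ hσ B hB
    classical
    have hne : (Finset.univ.filter (fun b => σ b ≠ 0)).Nonempty := by
      by_contra h
      rw [Finset.not_nonempty_iff_eq_empty, Finset.filter_eq_empty_iff] at h
      have : mdeg σ = 0 := Finset.sum_eq_zero (fun b hb => by
        have := h hb; omega)
      omega
    set a := (Finset.univ.filter (fun b => σ b ≠ 0)).max' hne with hadef
    have hamem : a ∈ Finset.univ.filter (fun b => σ b ≠ 0) := Finset.max'_mem _ hne
    have ha : 1 ≤ σ a := by
      have := (Finset.mem_filter.1 hamem).2
      omega
    have hmax : ∀ b, a < b → σ b = 0 := by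
      intro b hab
      by_contra hb
      have hbmem : b ∈ Finset.univ.filter (fun b => σ b ≠ 0) :=
        Finset.mem_filter.2 ⟨Finset.mem_univ b, hb⟩
      have hle : b ≤ a := Finset.le_max' _ b hbmem
      omega
    set σ' : MIdx m := σ - Pi.single a 1 with hσ'
    have hk : mdeg σ' = k := by
      rw [hσ', mdeg_sub_single ha]
      omega
    obtain ⟨C1, h1jet, h1fin, h1⟩ := step1 hB μ σ a ha
    set B' : Jet m n → ℝ := fun q => -(totalD a B q) with hB'def
    have hB' : IsJetFun B' := isJetFun_neg (hB.totalD a)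
    obtain ⟨C2, h2jet, h2fin, h2⟩ := ih σ' hk B' hB'
    refine ⟨fun c b p => C1 c b p + C2 c b p, ?_, ?_, ?_⟩
    · intro c b
      exact isJetFun_add (h1jet c b) (h2jet c b)
    · apply Set.Finite.subset (h1fin.union h2fin)
      intro q hq
      simp only [Set.mem_setOf_eq] at hq
      by_contra hq2
      apply hq
      simp only [Set.mem_union, Set.mem_setOf_eq, not_or, not_not] at hq2
      funext p
      rw [congrFun hq2.1 p, congrFun hq2.2 p]
      simp
    · intro c p
      rw [Dimg_add h1jet h2jet, ← h1 c p, ← h2 c p]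
      have hcancel :
          ((if c = (μ, σ) then B p else 0) -
              (if c = (μ, σ') then -(totalD a B p) else 0)) +
            ((if c = (μ, σ') then B' p else 0) -
              (if c = (μ, (0 : MIdx m)) then (-1:ℝ)^k * Dmulti σ' B' p else 0))
          = (if c = (μ, σ) then B p else 0) -
              (if c = (μ, (0 : MIdx m)) then (-1:ℝ)^k * Dmulti σ' B' p else 0) := by
        have hmid : (if c = (μ, σ') then B' p else 0)
            = (if c = (μ, σ') then -(totalD a B p) else 0) := rfl
        rw [hmid]
        ring
      rw [hcancel]
      have hDm : (-1:ℝ)^k * Dmulti σ' B' p = (-1:ℝ)^(k+1) * Dmulti σ B p := by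
        have h5 : Dmulti σ' B' = fun q => -(Dmulti σ' (totalD a B) q) := by
          rw [hB'def]
          exact Dmulti_neg σ' (totalD a B)
        have h6 : Dmulti σ B = Dmulti σ' (totalD a B) := Dmulti_peel σ a ha hmax B
        rw [h5, h6, pow_succ]
        ring
      rw [hDm]

end AuxIBP

/-- integration by parts modulo `D(Ω^{1,m−1})`.
(1) For a single coefficient `B` at `Γ^μ_σ` with `σ = a σ'`, the form
`Γ^μ_σ B ∧ Dx` is congruent to `Γ^μ_{σ'} (−D_a B) ∧ Dx` modulo the image of `D`.
(2) Consequently, every `ω = Σ Γ^μ_σ B^σ_μ ∧ Dx` (finitely many nonzero smooth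
coefficients) is congruent to its canonical representative
`Σ_μ Γ^μ B̃_μ ∧ Dx`, `B̃_μ = Σ_σ (−1)^{|σ|} D_σ B^σ_μ`. -/
theorem integration_by_parts {m n : ℕ} :
    (∀ (B : Jet m n → ℝ), IsJetFun B → ∀ (μ : Fin n) (σ : MIdx m) (a : Fin m),
      1 ≤ σ a →
      ∃ C : (Fin n × MIdx m) → Fin m → Jet m n → ℝ,
        (∀ c b, IsJetFun (C c b)) ∧
        {q : (Fin n × MIdx m) × Fin m | C q.1 q.2 ≠ 0}.Finite ∧
        ∀ (c : Fin n × MIdx m) (p : Jet m n),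
          (if c = (μ, σ) then B p else 0) -
            (if c = (μ, σ - Pi.single a 1) then -(totalD a B p) else 0) =
          Dimg C c p) ∧
    (∀ B : (Fin n × MIdx m) → Jet m n → ℝ,
      (∀ c, IsJetFun (B c)) → {c | B c ≠ 0}.Finite →
      ∃ C : (Fin n × MIdx m) → Fin m → Jet m n → ℝ,
        (∀ c b, IsJetFun (C c b)) ∧
        {q : (Fin n × MIdx m) × Fin m | C q.1 q.2 ≠ 0}.Finite ∧
        ∀ (c : Fin n × MIdx m) (p : Jet m n),
          B c p -
            (if c.2 = 0 then
              ∑' σ : MIdx m, (-1 : ℝ) ^ mdeg σ * Dmulti σ (B (c.1, σ)) p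
            else 0) =
          Dimg C c p) := by
  constructor
  · intro B hB μ σ a ha
    exact step1 hB μ σ a ha
  · intro B hBjet hBfin
    classical
    set S : Finset (Fin n × MIdx m) := hBfin.toFinset with hS
    have hmemS : ∀ e, e ∈ S ↔ B e ≠ 0 := by
      intro e
      rw [hS, Set.Finite.mem_toFinset]
      rfl
    have hex : ∀ e : Fin n × MIdx m,
        ∃ C : (Fin n × MIdx m) → Fin m → Jet m n → ℝ,
          (∀ c b, IsJetFun (C c b)) ∧
          {q : (Fin n × MIdx m) × Fin m | C q.1 q.2 ≠ 0}.Finite ∧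
          ∀ (c : Fin n × MIdx m) (p : Jet m n),
            (if c = (e.1, e.2) then B e p else 0) -
              (if c = (e.1, (0 : MIdx m)) then
                (-1:ℝ)^(mdeg e.2) * Dmulti e.2 (B e) p else 0) =
            Dimg C c p :=
      fun e => reduce e.1 (mdeg e.2) e.2 rfl (B e) (hBjet e)
    choose CC hjet hfin hid using hex
    refine ⟨fun c b p => ∑ e ∈ S, CC e c b p, ?_, ?_, ?_⟩
    · intro c b
      exact isJetFun_sum S _ (fun e _ => hjet e c b)
    · apply Set.Finite.subset (Set.Finite.biUnion S.finite_toSet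
        (fun e _ => hfin e))
      intro q hq
      simp only [Set.mem_setOf_eq] at hq
      by_contra hq2
      apply hq
      simp only [Set.mem_iUnion, Set.mem_setOf_eq, not_exists, not_not] at hq2
      funext p
      have : ∀ e ∈ S, CC e q.1 q.2 p = 0 := by
        intro e he
        exact congrFun (hq2 e he) p
      calc (fun p => ∑ e ∈ S, CC e q.1 q.2 p) p = ∑ e ∈ S, CC e q.1 q.2 p := rfl
        _ = 0 := Finset.sum_eq_zero this
    · intro c p
      have hDsum : ∀ (s : Finset (Fin n × MIdx m)),
          Dimg (fun c b p => ∑ e ∈ s, CC e c b p) c p = ∑ e ∈ s, Dimg (CC e) c p := by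
        intro s
        induction s using Finset.induction_on with
        | empty =>
          rw [Finset.sum_empty]
          calc Dimg (fun c b p => ∑ e ∈ (∅ : Finset (Fin n × MIdx m)), CC e c b p) c p
              = Dimg (fun _ _ => fun _ => (0:ℝ)) c p := by
                apply Dimg_congr
                intro c' b'
                funext p'
                simp
            _ = 0 := Dimg_zero c p
        | @insert x s' hx ih =>
          calc Dimg (fun c b p => ∑ e ∈ insert x s', CC e c b p) c p
              = Dimg (fun c b p => CC x c b p + ∑ e ∈ s', CC e c b p) c p := by
                apply Dimg_congr
                intro c' b'
                funext p'
                rw [Finset.sum_insert hx]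
            _ = Dimg (CC x) c p + Dimg (fun c b p => ∑ e ∈ s', CC e c b p) c p :=
                Dimg_add (hjet x) (fun c' b' => isJetFun_sum s' _ (fun e _ => hjet e c' b')) c p
            _ = ∑ e ∈ insert x s', Dimg (CC e) c p := by
                rw [ih, Finset.sum_insert hx]
      rw [hDsum S]
      rw [Finset.sum_congr rfl (fun e _ => (hid e c p).symm), Finset.sum_sub_distrib]
      have hfirst : ∑ e ∈ S, (if c = (e.1, e.2) then B e p else 0) = B c p := by
        have h1 : ∀ e ∈ S, (if c = (e.1, e.2) then B e p else 0)
            = (if c = e then B e p else 0) := by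
          intro e _
          simp
        rw [Finset.sum_congr rfl h1, Finset.sum_ite_eq S c (fun e => B e p)]
        by_cases hc : c ∈ S
        · rw [if_pos hc]
        · rw [if_neg hc]
          have hBc : B c = 0 := by
            by_contra hB0
            exact hc ((hmemS c).2 hB0)
          exact (congrFun hBc p).symm
      rw [hfirst]
      congr 1
      by_cases h0 : c.2 = 0
      · rw [if_pos h0]
        have hcond : ∀ e : Fin n × MIdx m, (c = (e.1, (0 : MIdx m))) ↔ (e.1 = c.1) := by
          intro e
          constructor
          · intro h
            rw [h]
          · intro h
            have : c = (c.1, c.2) := rfl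
            rw [this, h0, h]
        have h2 : ∑ e ∈ S, (if c = (e.1, (0:MIdx m)) then
            (-1:ℝ)^(mdeg e.2) * Dmulti e.2 (B e) p else 0)
            = ∑ e ∈ S.filter (fun e => e.1 = c.1),
              (-1:ℝ)^(mdeg e.2) * Dmulti e.2 (B e) p := by
          rw [Finset.sum_filter]
          apply Finset.sum_congr rfl
          intro e _
          simp only [hcond e]
        rw [h2]
        set T : Finset (MIdx m) := (S.filter (fun e => e.1 = c.1)).image Prod.snd with hT
        have hinj : ∀ x ∈ S.filter (fun e => e.1 = c.1),
            ∀ y ∈ S.filter (fun e => e.1 = c.1), x.2 = y.2 → x = y := by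
          intro x hx y hy hxy
          have hx1 : x.1 = c.1 := (Finset.mem_filter.1 hx).2
          have hy1 : y.1 = c.1 := (Finset.mem_filter.1 hy).2
          exact Prod.ext (hx1.trans hy1.symm) hxy
        have h3 : ∑ σ ∈ T, (-1:ℝ)^(mdeg σ) * Dmulti σ (B (c.1, σ)) p
            = ∑ e ∈ S.filter (fun e => e.1 = c.1),
              (-1:ℝ)^(mdeg e.2) * Dmulti e.2 (B e) p := by
          rw [hT, Finset.sum_image hinj]
          apply Finset.sum_congr rfl
          intro e he
          have he1 : e.1 = c.1 := (Finset.mem_filter.1 he).2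
          have : (c.1, e.2) = e := by
            rw [← he1]
          rw [this]
        rw [← h3]
        apply tsum_eq_sum
        intro σ hσT
        have hBz : B (c.1, σ) = 0 := by
          by_contra hB0
          apply hσT
          rw [hT]
          apply Finset.mem_image.2
          exact ⟨(c.1, σ), Finset.mem_filter.2 ⟨(hmemS _).2 hB0, rfl⟩, rfl⟩
        rw [hBz]
        have : Dmulti σ (0 : Jet m n → ℝ) = fun _ => 0 := Dmulti_zero_fun σ
        rw [congrFun this p, mul_zero]
      · rw [if_neg h0]
        symm
        apply Finset.sum_eq_zero
        intro e _
        rw [if_neg]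
        intro hcon
        apply h0
        rw [hcon]
end

section
/- d̄ L is always a total divergence: for every r-Lagrangian L, the (r+1)-Lagrangian d̄L = x^a_{r+1} F_a(L) can be written as Σ_{i=1}^{r+1} D_i B^i for some finite-order functions B^i of the jet variables x^a_σ (multi-indices σ in {1,…,r+1}). -/
open scoped BigOperators

/-- Multi-indices in the `r` parameters `t^1, …, t^r`, as exponent vectors. -/
abbrev PIdx (r : ℕ) := Fin r → ℕ

/-- The space of infinite jets (tangent elements) at a point of maps
`ℝ^r → ℝ^m`: the coordinates are `x^a_σ` (`x^a = x^a_∅` included). -/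
abbrev PJet (r m : ℕ) := (Fin m × PIdx r) → ℝ

variable {r m : ℕ}

/-- Partial derivative with respect to the jet coordinate `x^a_σ`. -/
noncomputable def ppd (c : Fin m × PIdx r) (f : PJet r m → ℝ) (p : PJet r m) : ℝ :=
  deriv (fun t => f (Function.update p c t)) (p c)

/-- The total derivative `D_i = Σ_{a,σ} x^a_{iσ} ∂/∂x^a_σ` in the `i`-th parameter. -/
noncomputable def ptotalD (i : Fin r) (f : PJet r m → ℝ) (p : PJet r m) : ℝ :=
  ∑' c : Fin m × PIdx r, p (c.1, c.2 + Pi.single i 1) * ppd c f p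

/-- The iterated total derivative `D_σ`. -/
noncomputable def pDmulti (σ : PIdx r) (f : PJet r m → ℝ) : PJet r m → ℝ :=
  (List.finRange r).foldr (fun i g => (ptotalD i)^[σ i] g) f

/-- Total degree of a multi-index. -/
def pdeg (σ : PIdx r) : ℕ := ∑ i, σ i

/-- An `r`-Lagrangian: a smooth function of finitely many jet coordinates. -/
def IsPJetFun (f : PJet r m → ℝ) : Prop :=
  ∃ (N : ℕ) (c : Fin N → Fin m × PIdx r) (F : (Fin N → ℝ) → ℝ),
    ContDiff ℝ (⊤ : ℕ∞) F ∧ ∀ p, f p = F (fun i => p (c i))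

/-- The variational derivative `F_a(L) = Σ_σ (−1)^{|σ|} D_σ (∂L/∂x^a_σ)`. -/
noncomputable def varder (a : Fin m) (L : PJet r m → ℝ) (p : PJet r m) : ℝ :=
  ∑' σ : PIdx r, (-1 : ℝ) ^ pdeg σ * pDmulti σ (ppd (a, σ) L) p

/-- Lift an `r`-Lagrangian to a function of jets in `r+1` parameters
(a multi-index `σ` in `t^1, …, t^r` becomes `Fin.snoc σ 0`). -/
def plift (L : PJet r m → ℝ) : PJet (r + 1) m → ℝ :=
  fun p => L (fun c => p (c.1, Fin.snoc c.2 0))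

/-- The variational differential `d̄L = Σ_a x^a_{r+1} F_a(L)`,
an `(r+1)`-Lagrangian. -/
noncomputable def dbar (L : PJet r m → ℝ) : PJet (r + 1) m → ℝ :=
  fun p => ∑ a : Fin m,
    p (a, Pi.single (Fin.last r) 1) * plift (fun q => varder a L q) p

namespace Scratch

lemma contDiff_precomp {N M : ℕ} (φ : Fin M → Fin N) :
    ContDiff ℝ (⊤ : ℕ∞) (fun (y : Fin N → ℝ) (i : Fin M) => y (φ i)) :=
  contDiff_pi.2 fun i => contDiff_apply ℝ ℝ (φ i)

lemma contDiff_apply' {N : ℕ} (j : Fin N) : ContDiff ℝ (⊤ : ℕ∞) (fun y : Fin N → ℝ => y j) :=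
  contDiff_apply ℝ ℝ j

lemma isPJetFun_coord (c0 : Fin m × PIdx r) : IsPJetFun (fun p : PJet r m => p c0) :=
  ⟨1, fun _ => c0, fun y => y 0, contDiff_apply ℝ ℝ 0, fun _ => rfl⟩

lemma isPJetFun_const (k : ℝ) : IsPJetFun (fun _ : PJet r m => k) :=
  ⟨0, Fin.elim0, fun _ => k, contDiff_const, fun _ => rfl⟩

lemma isPJetFun_add {f g : PJet r m → ℝ} (hf : IsPJetFun f) (hg : IsPJetFun g) :
    IsPJetFun (fun p => f p + g p) := by
  obtain ⟨N1, c1, F1, hF1, e1⟩ := hf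
  obtain ⟨N2, c2, F2, hF2, e2⟩ := hg
  refine ⟨N1 + N2, Fin.append c1 c2,
    fun y => F1 (fun i => y (Fin.castAdd N2 i)) + F2 (fun i => y (Fin.natAdd N1 i)),
    (hF1.comp (contDiff_precomp _)).add (hF2.comp (contDiff_precomp _)), fun p => ?_⟩
  simp [e1, e2, Fin.append_left, Fin.append_right]

lemma isPJetFun_mul {f g : PJet r m → ℝ} (hf : IsPJetFun f) (hg : IsPJetFun g) :
    IsPJetFun (fun p => f p * g p) := by
  obtain ⟨N1, c1, F1, hF1, e1⟩ := hf
  obtain ⟨N2, c2, F2, hF2, e2⟩ := hg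
  refine ⟨N1 + N2, Fin.append c1 c2,
    fun y => F1 (fun i => y (Fin.castAdd N2 i)) * F2 (fun i => y (Fin.natAdd N1 i)),
    (hF1.comp (contDiff_precomp _)).mul (hF2.comp (contDiff_precomp _)), fun p => ?_⟩
  simp [e1, e2, Fin.append_left, Fin.append_right]

lemma isPJetFun_smul (k : ℝ) {f : PJet r m → ℝ} (hf : IsPJetFun f) :
    IsPJetFun (fun p => k * f p) := isPJetFun_mul (isPJetFun_const k) hf

lemma isPJetFun_zero : IsPJetFun (fun _ : PJet r m => (0:ℝ)) := isPJetFun_const 0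

lemma isPJetFun_finsetSum {ι : Type*} (s : Finset ι) (f : ι → PJet r m → ℝ)
    (hf : ∀ i ∈ s, IsPJetFun (f i)) : IsPJetFun (fun p => ∑ i ∈ s, f i p) := by
  classical
  induction s using Finset.cons_induction with
  | empty => simpa using isPJetFun_zero
  | cons a s' ha ih =>
    simp only [Finset.sum_cons]
    exact isPJetFun_add (hf a (Finset.mem_cons_self _ _))
      (ih fun i hi => hf i (Finset.mem_cons_of_mem hi))

/-- the line function as an explicit affine curve -/
lemma line_eq {N : ℕ} (c : Fin N → Fin m × PIdx r) (F : (Fin N → ℝ) → ℝ)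
    {f : PJet r m → ℝ} (e : ∀ p, f p = F (fun i => p (c i)))
    (p : PJet r m) (c0 : Fin m × PIdx r) :
    (fun t => f (Function.update p c0 t)) =
      fun t => F ((fun i => if c i = c0 then (0:ℝ) else p (c i)) +
        t • (fun i => if c i = c0 then (1:ℝ) else 0)) := by
  funext t
  rw [e]
  congr 1
  funext i
  simp only [Pi.add_apply, Pi.smul_apply, smul_eq_mul, Function.update_apply]
  split_ifs <;> ring

lemma line_hasDerivAt {N : ℕ} {F : (Fin N → ℝ) → ℝ}
    (hF : ContDiff ℝ (⊤ : ℕ∞) F) (w v : Fin N → ℝ) (s : ℝ) :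
    HasDerivAt (fun t => F (w + t • v)) (fderiv ℝ F (w + s • v) v) s := by
  have h1 : HasDerivAt (fun t : ℝ => w + t • v) v s := by
    simpa using ((hasDerivAt_id s).smul_const v).const_add w
  have h2 := ((hF.differentiable (by simp)) (w + s • v)).hasFDerivAt
  exact h2.comp_hasDerivAt s h1

lemma jetLineDiff {f : PJet r m → ℝ} (hf : IsPJetFun f) (p : PJet r m)
    (c0 : Fin m × PIdx r) : Differentiable ℝ (fun t => f (Function.update p c0 t)) := by
  obtain ⟨N, c, F, hF, e⟩ := hf
  rw [line_eq c F e p c0]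
  intro s
  exact (line_hasDerivAt hF _ _ s).differentiableAt

lemma ppd_add {f g : PJet r m → ℝ} (hf : IsPJetFun f) (hg : IsPJetFun g)
    (c0 : Fin m × PIdx r) (p : PJet r m) :
    ppd c0 (fun p => f p + g p) p = ppd c0 f p + ppd c0 g p := by
  unfold ppd
  exact deriv_add ((jetLineDiff hf p c0) _) ((jetLineDiff hg p c0) _)

lemma ppd_mul {f g : PJet r m → ℝ} (hf : IsPJetFun f) (hg : IsPJetFun g)
    (c0 : Fin m × PIdx r) (p : PJet r m) :
    ppd c0 (fun p => f p * g p) p = ppd c0 f p * g p + f p * ppd c0 g p := by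
  unfold ppd
  rw [deriv_fun_mul ((jetLineDiff hf p c0) _) ((jetLineDiff hg p c0) _)]
  rw [Function.update_eq_self]

lemma ppd_smul (k : ℝ) {f : PJet r m → ℝ} (hf : IsPJetFun f)
    (c0 : Fin m × PIdx r) (p : PJet r m) :
    ppd c0 (fun p => k * f p) p = k * ppd c0 f p := by
  unfold ppd
  rw [deriv_const_mul k ((jetLineDiff hf p c0) _)]

lemma ppd_zero (c0 : Fin m × PIdx r) (p : PJet r m) :
    ppd c0 (fun _ => (0:ℝ)) p = 0 := by
  simp [ppd]

lemma ppd_eq_zero_of_not_range {N : ℕ} {c : Fin N → Fin m × PIdx r} {F : (Fin N → ℝ) → ℝ}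
    {f : PJet r m → ℝ} (e : ∀ p, f p = F (fun i => p (c i)))
    {c0 : Fin m × PIdx r} (h : c0 ∉ Set.range c) (p : PJet r m) :
    ppd c0 f p = 0 := by
  have : (fun t => f (Function.update p c0 t)) = fun _ => f p := by
    funext t
    rw [e, e]
    congr 1
    funext i
    rw [Function.update_apply]
    rw [if_neg]
    intro hc
    exact h ⟨i, hc⟩
  unfold ppd
  rw [this, deriv_const]

lemma isPJetFun_ppd {f : PJet r m → ℝ} (hf : IsPJetFun f) (c0 : Fin m × PIdx r) :
    IsPJetFun (ppd c0 f) := by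
  classical
  obtain ⟨N, c, F, hF, e⟩ := hf
  set v : Fin N → ℝ := fun i => if c i = c0 then (1:ℝ) else 0 with hv
  refine ⟨N + 1, Fin.snoc c c0,
    fun y => fderiv ℝ F ((fun i => if c i = c0 then (0:ℝ) else y (Fin.castSucc i)) +
      (y (Fin.last N)) • v) v, ?_, fun p => ?_⟩
  · apply ContDiff.clm_apply _ contDiff_const
    apply (hF.fderiv_right (m := (⊤ : ℕ∞)) (by simp)).comp
    apply ContDiff.add
    · exact contDiff_pi.2 fun i => by
        split_ifs
        · exact contDiff_const
        · exact contDiff_apply' (Fin.castSucc i)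
    · exact (contDiff_apply' (Fin.last N)).smul contDiff_const
  · unfold ppd
    rw [line_eq c F e p c0]
    have := (line_hasDerivAt hF (fun i => if c i = c0 then (0:ℝ) else p (c i)) v
      (p c0)).deriv
    rw [this]
    simp [Fin.snoc_castSucc, Fin.snoc_last]

lemma exists_support {f : PJet r m → ℝ} (hf : IsPJetFun f) :
    ∃ S : Finset (Fin m × PIdx r), ∀ c0 ∉ S, ∀ p, ppd c0 f p = 0 := by
  classical
  obtain ⟨N, c, F, hF, e⟩ := hf
  refine ⟨Finset.image c Finset.univ, fun c0 hc0 p => ?_⟩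
  refine ppd_eq_zero_of_not_range e ?_ p
  rintro ⟨i, rfl⟩
  exact hc0 (Finset.mem_image_of_mem c (Finset.mem_univ i))

lemma ptotalD_eq_sum {f : PJet r m → ℝ} (S : Finset (Fin m × PIdx r))
    (hS : ∀ c0 ∉ S, ∀ p, ppd c0 f p = 0) (i : Fin r) (p : PJet r m) :
    ptotalD i f p = ∑ c0 ∈ S, p (c0.1, c0.2 + Pi.single i 1) * ppd c0 f p :=
  tsum_eq_sum (fun b hb => by rw [hS b hb p, mul_zero])

lemma ptotalD_zero (i : Fin r) (p : PJet r m) : ptotalD i (fun _ => (0:ℝ)) p = 0 := by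
  unfold ptotalD
  simp only [ppd_zero, mul_zero, tsum_zero]

lemma ptotalD_add {f g : PJet r m → ℝ} (hf : IsPJetFun f) (hg : IsPJetFun g)
    (i : Fin r) (p : PJet r m) :
    ptotalD i (fun p => f p + g p) p = ptotalD i f p + ptotalD i g p := by
  classical
  obtain ⟨Sf, hSf⟩ := exists_support hf
  obtain ⟨Sg, hSg⟩ := exists_support hg
  have hf' : ∀ c0 ∉ Sf ∪ Sg, ∀ p, ppd c0 f p = 0 :=
    fun c0 hc0 => hSf c0 (fun h => hc0 (Finset.mem_union_left _ h))
  have hg' : ∀ c0 ∉ Sf ∪ Sg, ∀ p, ppd c0 g p = 0 :=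
    fun c0 hc0 => hSg c0 (fun h => hc0 (Finset.mem_union_right _ h))
  have hfg : ∀ c0 ∉ Sf ∪ Sg, ∀ p, ppd c0 (fun p => f p + g p) p = 0 := by
    intro c0 hc0 p
    rw [ppd_add hf hg, hf' c0 hc0, hg' c0 hc0, add_zero]
  rw [ptotalD_eq_sum _ hfg, ptotalD_eq_sum _ hf', ptotalD_eq_sum _ hg',
    ← Finset.sum_add_distrib]
  exact Finset.sum_congr rfl fun c0 _ => by rw [ppd_add hf hg]; ring

lemma ptotalD_smul (k : ℝ) {f : PJet r m → ℝ} (hf : IsPJetFun f)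
    (i : Fin r) (p : PJet r m) :
    ptotalD i (fun p => k * f p) p = k * ptotalD i f p := by
  classical
  obtain ⟨Sf, hSf⟩ := exists_support hf
  have hkf : ∀ c0 ∉ Sf, ∀ p, ppd c0 (fun p => k * f p) p = 0 := by
    intro c0 hc0 p
    rw [ppd_smul k hf, hSf c0 hc0, mul_zero]
  rw [ptotalD_eq_sum _ hkf, ptotalD_eq_sum _ hSf, Finset.mul_sum]
  exact Finset.sum_congr rfl fun c0 _ => by rw [ppd_smul k hf]; ring

lemma ptotalD_mul {f g : PJet r m → ℝ} (hf : IsPJetFun f) (hg : IsPJetFun g)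
    (i : Fin r) (p : PJet r m) :
    ptotalD i (fun p => f p * g p) p = f p * ptotalD i g p + ptotalD i f p * g p := by
  classical
  obtain ⟨Sf, hSf⟩ := exists_support hf
  obtain ⟨Sg, hSg⟩ := exists_support hg
  have hf' : ∀ c0 ∉ Sf ∪ Sg, ∀ p, ppd c0 f p = 0 :=
    fun c0 hc0 => hSf c0 (fun h => hc0 (Finset.mem_union_left _ h))
  have hg' : ∀ c0 ∉ Sf ∪ Sg, ∀ p, ppd c0 g p = 0 :=
    fun c0 hc0 => hSg c0 (fun h => hc0 (Finset.mem_union_right _ h))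
  have hfg : ∀ c0 ∉ Sf ∪ Sg, ∀ p, ppd c0 (fun p => f p * g p) p = 0 := by
    intro c0 hc0 p
    rw [ppd_mul hf hg, hf' c0 hc0, hg' c0 hc0]; ring
  rw [ptotalD_eq_sum _ hfg, ptotalD_eq_sum _ hf', ptotalD_eq_sum _ hg',
    Finset.mul_sum, Finset.sum_mul, ← Finset.sum_add_distrib]
  exact Finset.sum_congr rfl fun c0 _ => by rw [ppd_mul hf hg]; ring

lemma isPJetFun_ptotalD {f : PJet r m → ℝ} (hf : IsPJetFun f) (i : Fin r) :
    IsPJetFun (ptotalD i f) := by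
  obtain ⟨S, hS⟩ := exists_support hf
  have : ptotalD i f = fun p => ∑ c0 ∈ S, p (c0.1, c0.2 + Pi.single i 1) * ppd c0 f p :=
    funext fun p => ptotalD_eq_sum S hS i p
  rw [this]
  exact isPJetFun_finsetSum S _ fun c0 _ =>
    isPJetFun_mul (isPJetFun_coord _) (isPJetFun_ppd hf c0)

lemma ppd_coord (c' c0 : Fin m × PIdx r) (p : PJet r m) :
    ppd c' (fun p => p c0) p = if c0 = c' then 1 else 0 := by
  classical
  unfold ppd
  simp only [Function.update_apply]
  split_ifs with h
  · exact deriv_id _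
  · exact deriv_const _ _

lemma ptotalD_coord (j : Fin r) (c0 : Fin m × PIdx r) (p : PJet r m) :
    ptotalD j (fun p => p c0) p = p (c0.1, c0.2 + Pi.single j 1) := by
  classical
  unfold ptotalD
  rw [tsum_eq_single c0 (fun b hb => ?_)]
  · rw [ppd_coord, if_pos rfl, mul_one]
  · rw [ppd_coord, if_neg (fun h => hb h.symm), mul_zero]

/-! ### iterated total derivatives along lists -/

noncomputable def DL {s : ℕ} (l : List (Fin s)) (f : PJet s m → ℝ) : PJet s m → ℝ :=
  l.foldr ptotalD f

noncomputable def DLrev {s : ℕ} (l : List (Fin s)) (f : PJet s m → ℝ) : PJet s m → ℝ :=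
  l.foldl (fun g i => ptotalD i g) f

@[simp] lemma DL_nil {s : ℕ} (f : PJet s m → ℝ) : DL [] f = f := rfl
@[simp] lemma DL_cons {s : ℕ} (i : Fin s) (l : List (Fin s)) (f : PJet s m → ℝ) :
    DL (i :: l) f = ptotalD i (DL l f) := rfl
@[simp] lemma DLrev_nil {s : ℕ} (f : PJet s m → ℝ) : DLrev [] f = f := rfl
@[simp] lemma DLrev_cons {s : ℕ} (i : Fin s) (l : List (Fin s)) (f : PJet s m → ℝ) :
    DLrev (i :: l) f = DLrev l (ptotalD i f) := rfl

lemma DL_append {s : ℕ} (l1 l2 : List (Fin s)) (f : PJet s m → ℝ) :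
    DL (l1 ++ l2) f = DL l1 (DL l2 f) := by
  unfold DL; rw [List.foldr_append]

lemma isPJetFun_DL {s : ℕ} (l : List (Fin s)) {f : PJet s m → ℝ} (hf : IsPJetFun f) :
    IsPJetFun (DL l f) := by
  induction l with
  | nil => exact hf
  | cons i l ih => exact isPJetFun_ptotalD ih i

lemma isPJetFun_DLrev {s : ℕ} (l : List (Fin s)) {f : PJet s m → ℝ} (hf : IsPJetFun f) :
    IsPJetFun (DLrev l f) := by
  induction l generalizing f with
  | nil => exact hf
  | cons i l ih => exact ih (isPJetFun_ptotalD hf i)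

lemma DL_zero {s : ℕ} (l : List (Fin s)) : DL l (fun _ : PJet s m => (0:ℝ)) = fun _ => 0 := by
  induction l with
  | nil => rfl
  | cons i l ih =>
    rw [DL_cons, ih]
    funext p
    exact ptotalD_zero i p

lemma DLrev_coord {s : ℕ} (l : List (Fin s)) (b : Fin m) (τ : PIdx s) :
    DLrev l (fun p : PJet s m => p (b, τ)) = fun p => p (b, τ + fun k => l.count k) := by
  induction l generalizing τ with
  | nil =>
    have h0 : (τ + fun k => List.count k ([] : List (Fin s))) = τ := by
      funext k; simp
    rw [h0]
    rfl
  | cons i l ih =>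
    rw [DLrev_cons]
    have h1 : ptotalD i (fun p : PJet s m => p (b, τ)) = fun p => p (b, τ + Pi.single i 1) :=
      funext fun p => ptotalD_coord i (b, τ) p
    rw [h1, ih]
    funext p
    congr 2
    funext k
    simp only [Pi.add_apply, Pi.single_apply, List.count_cons, beq_iff_eq]
    rcases eq_or_ne k i with h | h
    · subst h; simp only [if_pos rfl]; omega
    · simp only [if_neg h, if_neg (Ne.symm h)]; omega

/-! ### divergences -/

def IsDiv {s : ℕ} (f : PJet s m → ℝ) : Prop :=
  ∃ B : Fin s → (PJet s m → ℝ), (∀ i, IsPJetFun (B i)) ∧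
    ∀ p, f p = ∑ i, ptotalD i (B i) p

lemma IsDiv_congr {s : ℕ} {f g : PJet s m → ℝ} (h : ∀ p, f p = g p) (hg : IsDiv g) :
    IsDiv f := by
  obtain ⟨B, hB, he⟩ := hg
  exact ⟨B, hB, fun p => (h p).trans (he p)⟩

lemma IsDiv_zero {s : ℕ} : IsDiv (fun _ : PJet s m => (0:ℝ)) := by
  refine ⟨fun _ _ => 0, fun _ => isPJetFun_zero, fun p => ?_⟩
  simp [ptotalD_zero]

lemma IsDiv_add {s : ℕ} {f g : PJet s m → ℝ} (hf : IsDiv f) (hg : IsDiv g) :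
    IsDiv (fun p => f p + g p) := by
  obtain ⟨B1, hB1, he1⟩ := hf
  obtain ⟨B2, hB2, he2⟩ := hg
  refine ⟨fun i p => B1 i p + B2 i p, fun i => isPJetFun_add (hB1 i) (hB2 i), fun p => ?_⟩
  dsimp only
  rw [he1 p, he2 p, ← Finset.sum_add_distrib]
  exact Finset.sum_congr rfl fun i _ => (ptotalD_add (hB1 i) (hB2 i) i p).symm

lemma IsDiv_smul {s : ℕ} (k : ℝ) {f : PJet s m → ℝ} (hf : IsDiv f) :
    IsDiv (fun p => k * f p) := by
  obtain ⟨B, hB, he⟩ := hf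
  refine ⟨fun i p => k * B i p, fun i => isPJetFun_smul k (hB i), fun p => ?_⟩
  dsimp only
  rw [he p, Finset.mul_sum]
  exact Finset.sum_congr rfl fun i _ => (ptotalD_smul k (hB i) i p).symm

lemma IsDiv_sub {s : ℕ} {f g : PJet s m → ℝ} (hf : IsDiv f) (hg : IsDiv g) :
    IsDiv (fun p => f p - g p) := by
  refine IsDiv_congr (g := fun p => f p + (-1) * g p) (fun p => by ring) ?_
  exact IsDiv_add hf (IsDiv_smul (-1) hg)

lemma IsDiv_sum {s : ℕ} {ι : Type*} (t : Finset ι) (f : ι → PJet s m → ℝ)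
    (hf : ∀ i ∈ t, IsDiv (f i)) : IsDiv (fun p => ∑ i ∈ t, f i p) := by
  classical
  induction t using Finset.cons_induction with
  | empty => simpa using IsDiv_zero
  | cons a t' ha ih =>
    simp only [Finset.sum_cons]
    exact IsDiv_add (hf a (Finset.mem_cons_self _ _))
      (ih fun i hi => hf i (Finset.mem_cons_of_mem hi))

lemma IsDiv_D {s : ℕ} (j : Fin s) {g : PJet s m → ℝ} (hg : IsPJetFun g) :
    IsDiv (ptotalD j g) := by
  classical
  refine ⟨fun i => if i = j then g else fun _ => 0, fun i => ?_, fun p => ?_⟩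
  · dsimp only
    split_ifs
    · exact hg
    · exact isPJetFun_zero
  · rw [Finset.sum_eq_single_of_mem j (Finset.mem_univ j) (fun i _ hij => ?_)]
    · dsimp only
      rw [if_pos rfl]
    · dsimp only
      rw [if_neg hij]
      exact ptotalD_zero i p

lemma IsDiv_IBP {s : ℕ} {u v : PJet s m → ℝ} (hu : IsPJetFun u) (hv : IsPJetFun v)
    (i : Fin s) :
    IsDiv (fun p => u p * ptotalD i v p + ptotalD i u p * v p) := by
  refine IsDiv_congr (g := ptotalD i (fun p => u p * v p)) (fun p => ?_) ?_
  · rw [ptotalD_mul hu hv]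
  · exact IsDiv_D i (isPJetFun_mul hu hv)

lemma IsDiv_bracket {s : ℕ} (l : List (Fin s)) {u g : PJet s m → ℝ}
    (hu : IsPJetFun u) (hg : IsPJetFun g) :
    IsDiv (fun p => u p * DL l g p - (-1:ℝ)^l.length * (DLrev l u p * g p)) := by
  induction l generalizing u with
  | nil =>
    refine IsDiv_congr (g := fun _ => (0:ℝ)) (fun p => by simp) IsDiv_zero
  | cons i l ih =>
    have h1 := IsDiv_IBP hu (isPJetFun_DL l hg) i
    have h2 := ih (isPJetFun_ptotalD hu i)
    refine IsDiv_congr (g := fun p =>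
      (u p * ptotalD i (DL l g) p + ptotalD i u p * DL l g p) -
      (ptotalD i u p * DL l g p - (-1:ℝ)^l.length * (DLrev l (ptotalD i u) p * g p)))
      (fun p => ?_) (IsDiv_sub h1 h2)
    rw [DL_cons, DLrev_cons]
    simp only [List.length_cons, pow_succ]
    ring

/-! ### lifting to `r+1` parameters -/

/-- restriction of an `(r+1)`-jet to an `r`-jet -/
def pres (p : PJet (r+1) m) : PJet r m := fun c => p (c.1, Fin.snoc c.2 0)

lemma plift_apply (f : PJet r m → ℝ) (p : PJet (r+1) m) : plift f p = f (pres p) := rfl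

lemma snoc_zero_injective : Function.Injective (fun τ : PIdx r => (Fin.snoc τ 0 : PIdx (r+1))) := by
  intro τ1 τ2 h
  funext j
  have := congrFun h (Fin.castSucc j)
  simpa [Fin.snoc_castSucc] using this

/-- lift of an index pair -/
def liftIdx (c0 : Fin m × PIdx r) : Fin m × PIdx (r+1) := (c0.1, Fin.snoc c0.2 0)

lemma liftIdx_injective : Function.Injective (liftIdx (r := r) (m := m)) := by
  intro c1 c2 h
  obtain ⟨h1, h2⟩ := Prod.mk.injEq .. ▸ h
  exact Prod.ext h1 (snoc_zero_injective h2)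

lemma isPJetFun_plift {f : PJet r m → ℝ} (hf : IsPJetFun f) : IsPJetFun (plift f) := by
  obtain ⟨N, c, F, hF, e⟩ := hf
  exact ⟨N, fun i => liftIdx (c i), F, hF, fun p => e (pres p)⟩

lemma pres_update (p : PJet (r+1) m) (b : Fin m) (τ : PIdx r) (t : ℝ) :
    pres (Function.update p (b, Fin.snoc τ 0) t) = Function.update (pres p) (b, τ) t := by
  classical
  funext c0
  simp only [pres, Function.update_apply]
  by_cases h : c0 = (b, τ)
  · subst h
    simp
  · rw [if_neg h, if_neg ?_]
    intro hc
    apply h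
    have h1 : c0.1 = b := (Prod.mk.injEq .. ▸ hc).1
    have h2 : (Fin.snoc c0.2 0 : PIdx (r+1)) = Fin.snoc τ 0 := (Prod.mk.injEq .. ▸ hc).2
    exact Prod.ext h1 (snoc_zero_injective h2)

lemma ppd_plift (f : PJet r m → ℝ) (b : Fin m) (τ : PIdx r) (p : PJet (r+1) m) :
    ppd (b, Fin.snoc τ 0) (plift f) p = ppd (b, τ) f (pres p) := by
  unfold ppd
  have : (fun t => plift f (Function.update p (b, Fin.snoc τ 0) t)) =
      fun t => f (Function.update (pres p) (b, τ) t) := by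
    funext t
    rw [plift_apply, pres_update]
  rw [this]
  rfl

lemma ppd_plift_zero (f : PJet r m → ℝ) (b : Fin m) (τ' : PIdx (r+1))
    (h : τ' (Fin.last r) ≠ 0) (p : PJet (r+1) m) :
    ppd (b, τ') (plift f) p = 0 := by
  classical
  have : (fun t => plift f (Function.update p (b, τ') t)) = fun _ => plift f p := by
    funext t
    rw [plift_apply, plift_apply]
    congr 1
    funext c0
    simp only [pres, Function.update_apply]
    rw [if_neg]
    intro hc
    apply h
    have h2 : (Fin.snoc c0.2 0 : PIdx (r+1)) = τ' := (Prod.mk.injEq .. ▸ hc).2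
    rw [← h2, Fin.snoc_last]
  unfold ppd
  rw [this, deriv_const]

lemma snoc_add_castSucc (τ : PIdx r) (i : Fin r) :
    (Fin.snoc τ 0 : PIdx (r+1)) + Pi.single (Fin.castSucc i) 1 =
      Fin.snoc (τ + Pi.single i 1) 0 := by
  funext k
  induction k using Fin.lastCases with
  | last =>
    simp only [Pi.add_apply, Fin.snoc_last]
    rw [Pi.single_apply, if_neg (Fin.castSucc_lt_last i).ne']
    rfl
  | cast j =>
    simp only [Pi.add_apply, Fin.snoc_castSucc]
    rw [Pi.single_apply, Pi.single_apply]
    simp [Fin.castSucc_inj]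

lemma plift_ptotalD {f : PJet r m → ℝ} (hf : IsPJetFun f) (i : Fin r) :
    plift (ptotalD i f) = ptotalD (Fin.castSucc i) (plift f) := by
  classical
  obtain ⟨N, c, F, hF, e⟩ := hf
  have hfjet : IsPJetFun f := ⟨N, c, F, hF, e⟩
  have e' : ∀ p, plift f p = F (fun i => p (liftIdx (c i))) := fun p => e (pres p)
  funext p
  have hS : ∀ c0 ∉ Finset.image c Finset.univ, ∀ q, ppd c0 f q = 0 := by
    intro c0 hc0 q
    refine ppd_eq_zero_of_not_range e ?_ q
    rintro ⟨j, rfl⟩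
    exact hc0 (Finset.mem_image_of_mem c (Finset.mem_univ j))
  have hS' : ∀ c0' ∉ Finset.image (fun j => liftIdx (c j)) Finset.univ, ∀ q,
      ppd c0' (plift f) q = 0 := by
    intro c0' hc0' q
    refine ppd_eq_zero_of_not_range e' ?_ q
    rintro ⟨j, rfl⟩
    exact hc0' (Finset.mem_image_of_mem _ (Finset.mem_univ j))
  rw [plift_apply, ptotalD_eq_sum _ hS i (pres p), ptotalD_eq_sum _ hS' (Fin.castSucc i) p]
  have himg : Finset.image (fun j => liftIdx (c j)) Finset.univ =
      Finset.image liftIdx (Finset.image c Finset.univ) := by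
    rw [Finset.image_image]
    rfl
  rw [himg, Finset.sum_image (fun x _ y _ h => liftIdx_injective h)]
  apply Finset.sum_congr rfl
  intro c0 _
  have h1 : ppd (liftIdx c0) (plift f) p = ppd c0 f (pres p) := ppd_plift f c0.1 c0.2 p
  rw [h1]
  congr 1
  show pres p (c0.1, c0.2 + Pi.single i 1) =
    p ((liftIdx c0).1, (liftIdx c0).2 + Pi.single (Fin.castSucc i) 1)
  unfold pres liftIdx
  rw [snoc_add_castSucc]

lemma plift_DL {f : PJet r m → ℝ} (hf : IsPJetFun f) (l : List (Fin r)) :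
    plift (DL l f) = DL (l.map Fin.castSucc) (plift f) := by
  induction l with
  | nil => rfl
  | cons i l ih =>
    rw [List.map_cons, DL_cons, DL_cons, ← ih, plift_ptotalD (isPJetFun_DL l hf)]

/-! ### `pDmulti` as a list derivative -/

def mIdxList (σ : PIdx r) : List (Fin r) :=
  (List.finRange r).flatMap fun i => List.replicate (σ i) i

lemma iterate_eq_DL {s : ℕ} (i : Fin s) (n : ℕ) (f : PJet s m → ℝ) :
    (ptotalD i)^[n] f = DL (List.replicate n i) f := by
  induction n with
  | zero => rfl
  | succ n ih =>
    rw [Function.iterate_succ_apply', ih, List.replicate_succ, DL_cons]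

lemma pDmulti_eq_DL (σ : PIdx r) (f : PJet r m → ℝ) :
    pDmulti σ f = DL (mIdxList σ) f := by
  unfold pDmulti mIdxList
  generalize List.finRange r = l
  induction l with
  | nil => rfl
  | cons j l ih =>
    rw [List.foldr_cons, List.flatMap_cons, DL_append, ih, iterate_eq_DL]

lemma pDmulti_zero (σ : PIdx r) : pDmulti σ (fun _ : PJet r m => (0:ℝ)) = fun _ => 0 := by
  rw [pDmulti_eq_DL, DL_zero]

lemma count_flat_zero (σ : PIdx r) (l : List (Fin r)) (i : Fin r) (h : i ∉ l) :
    (l.flatMap fun j => List.replicate (σ j) j).count i = 0 := by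
  induction l with
  | nil => rfl
  | cons j l ih =>
    rw [List.flatMap_cons, List.count_append, List.count_replicate,
      if_neg, ih (fun hi => h (List.mem_cons_of_mem j hi))]
    simp only [beq_iff_eq]
    intro hj
    exact h (hj ▸ (List.mem_cons_self : j ∈ j :: l))

lemma count_flat (σ : PIdx r) (l : List (Fin r)) (hl : l.Nodup) (i : Fin r) (hi : i ∈ l) :
    (l.flatMap fun j => List.replicate (σ j) j).count i = σ i := by
  induction l with
  | nil => cases hi
  | cons j l ih =>
    rw [List.flatMap_cons, List.count_append, List.count_replicate]
    rcases List.nodup_cons.1 hl with ⟨hj, hl'⟩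
    rcases eq_or_ne i j with h | h
    · subst h
      rw [if_pos (by simp), count_flat_zero σ l i hj]
      omega
    · have hil : i ∈ l := by
        cases hi with
        | head => exact absurd rfl h
        | tail _ ht => exact ht
      rw [if_neg (by simpa using h.symm), ih hl' hil]
      omega

lemma count_mIdxList (σ : PIdx r) (i : Fin r) : (mIdxList σ).count i = σ i :=
  count_flat σ _ (List.nodup_finRange r) i (List.mem_finRange i)

lemma length_mIdxList (σ : PIdx r) : (mIdxList σ).length = pdeg σ := by
  unfold mIdxList
  rw [List.length_flatMap]
  have : List.map (List.length ∘ fun j => List.replicate (σ j) j) (List.finRange r) =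
      List.map σ (List.finRange r) := by
    apply List.map_congr_left
    intro j _
    simp
  rw [show List.map (fun a => (List.replicate (σ a) a).length) (List.finRange r) =
    List.map σ (List.finRange r) from this, ← Fin.sum_univ_def]
  rfl

/-! ### counting in the lifted multi-index list -/

lemma count_map_castSucc (l : List (Fin r)) (i : Fin r) :
    (l.map Fin.castSucc).count (Fin.castSucc i) = l.count i := by
  classical
  exact List.count_map_of_injective l Fin.castSucc (Fin.castSucc_injective r) i

lemma count_map_castSucc_last (l : List (Fin r)) :
    (l.map Fin.castSucc).count (Fin.last r) = 0 := by
  rw [List.count_eq_zero]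
  intro hmem
  obtain ⟨j, _, hj⟩ := List.mem_map.1 hmem
  exact (Fin.castSucc_lt_last j).ne hj

lemma ecount_map_mIdxList (σ : PIdx r) :
    ((Pi.single (Fin.last r) 1 : PIdx (r+1)) +
      fun k => List.count k ((mIdxList σ).map Fin.castSucc)) = Fin.snoc σ 1 := by
  funext k
  induction k using Fin.lastCases with
  | last =>
    simp only [Pi.add_apply, Pi.single_eq_same, count_map_castSucc_last, Fin.snoc_last]
  | cast j =>
    simp only [Pi.add_apply, Fin.snoc_castSucc, count_map_castSucc, count_mIdxList]
    rw [Pi.single_apply, if_neg (Fin.castSucc_lt_last j).ne]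
    omega

lemma snoc_zero_add_last (σ : PIdx r) :
    (Fin.snoc σ 0 : PIdx (r+1)) + Pi.single (Fin.last r) 1 = Fin.snoc σ 1 := by
  funext k
  induction k using Fin.lastCases with
  | last => simp
  | cast j =>
    simp only [Pi.add_apply, Fin.snoc_castSucc]
    rw [Pi.single_apply, if_neg (Fin.castSucc_lt_last j).ne]
    omega

lemma DLrev_u (a : Fin m) (σ : PIdx r) :
    DLrev ((mIdxList σ).map Fin.castSucc)
        (fun p : PJet (r+1) m => p (a, Pi.single (Fin.last r) 1)) =
      fun p => p (a, Fin.snoc σ 1) := by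
  rw [DLrev_coord, ecount_map_mIdxList]

/-! ### the main theorem -/

theorem dbar_isDiv {L : PJet r m → ℝ} (hL : IsPJetFun L) : IsDiv (dbar L) := by
  classical
  obtain ⟨N, c, F, hF, e⟩ := hL
  have hLjet : IsPJetFun L := ⟨N, c, F, hF, e⟩
  set S : Finset (PIdx r) := Finset.image (fun i => (c i).2) Finset.univ with hSdef
  have hppdz : ∀ (a : Fin m) (σ : PIdx r), σ ∉ S → ppd (a, σ) L = fun _ => 0 := by
    intro a σ hσ
    funext q
    refine ppd_eq_zero_of_not_range e ?_ q
    rintro ⟨i, hi⟩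
    refine hσ (Finset.mem_image.2 ⟨i, Finset.mem_univ i, ?_⟩)
    rw [hi]
  -- `dbar` as a finite double sum
  have hdbar : ∀ p, dbar L p = ∑ a : Fin m, ∑ σ ∈ S,
      (-1:ℝ)^(pdeg σ) * (p (a, Pi.single (Fin.last r) 1) *
        DL ((mIdxList σ).map Fin.castSucc) (plift (ppd (a,σ) L)) p) := by
    intro p
    unfold dbar
    apply Finset.sum_congr rfl
    intro a _
    have h1 : plift (fun q => varder a L q) p = varder a L (pres p) := rfl
    rw [h1]
    unfold varder
    rw [tsum_eq_sum (s := S) (fun σ hσ => by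
      rw [hppdz a σ hσ, pDmulti_zero]
      simp)]
    rw [Finset.mul_sum]
    apply Finset.sum_congr rfl
    intro σ _
    have h2 : pDmulti σ (ppd (a,σ) L) (pres p)
        = DL ((mIdxList σ).map Fin.castSucc) (plift (ppd (a,σ) L)) p := by
      rw [pDmulti_eq_DL, ← plift_DL (isPJetFun_ppd hLjet _), plift_apply]
    rw [h2]
    ring
  -- `D_{r+1} (plift L)` as a finite double sum
  have e' : ∀ p, plift L p = F (fun i => p (liftIdx (c i))) := fun p => e (pres p)
  set T : Finset (Fin m × PIdx (r+1)) := Finset.image (fun i => liftIdx (c i)) Finset.univ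
    with hTdef
  have hT : ∀ c0' ∉ T, ∀ q, ppd c0' (plift L) q = 0 := by
    intro c0' h q
    refine ppd_eq_zero_of_not_range e' ?_ q
    rintro ⟨j, rfl⟩
    exact h (Finset.mem_image_of_mem _ (Finset.mem_univ j))
  set T' : Finset (Fin m × PIdx (r+1)) :=
    Finset.univ ×ˢ (S.image fun σ => (Fin.snoc σ 0 : PIdx (r+1))) with hT'def
  have hsub : T ⊆ T' := by
    intro x hx
    obtain ⟨j, _, rfl⟩ := Finset.mem_image.1 hx
    refine Finset.mem_product.2 ⟨Finset.mem_univ _, ?_⟩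
    exact Finset.mem_image.2 ⟨(c j).2, Finset.mem_image.2 ⟨j, Finset.mem_univ j, rfl⟩, rfl⟩
  have hDlast : ∀ p, ptotalD (Fin.last r) (plift L) p = ∑ a : Fin m, ∑ σ ∈ S,
      p (a, Fin.snoc σ 1) * plift (ppd (a,σ) L) p := by
    intro p
    rw [ptotalD_eq_sum T hT _ p]
    rw [Finset.sum_subset hsub (fun x hx hxT => ?_)]
    · rw [hT'def, Finset.sum_product]
      apply Finset.sum_congr rfl
      intro a _
      rw [Finset.sum_image (fun x _ y _ h => snoc_zero_injective h)]
      apply Finset.sum_congr rfl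
      intro σ _
      rw [ppd_plift, snoc_zero_add_last]
      rfl
    · obtain ⟨b, τ⟩ := x
      obtain ⟨_, hx2⟩ := Finset.mem_product.1 hx
      obtain ⟨σ, hσS, hσ⟩ := Finset.mem_image.1 hx2
      subst hσ
      have hnr : (b, σ) ∉ Set.range c := by
        rintro ⟨j, hj⟩
        apply hxT
        refine Finset.mem_image.2 ⟨j, Finset.mem_univ j, ?_⟩
        rw [hj]
        rfl
      rw [ppd_plift, ppd_eq_zero_of_not_range e hnr (pres p), mul_zero]
  -- the divergence part
  have hbig : IsDiv (fun p => ∑ a : Fin m, ∑ σ ∈ S,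
      (-1:ℝ)^(pdeg σ) * (p (a, Pi.single (Fin.last r) 1) *
          DL ((mIdxList σ).map Fin.castSucc) (plift (ppd (a,σ) L)) p -
        (-1:ℝ)^(((mIdxList σ).map Fin.castSucc).length) *
          (DLrev ((mIdxList σ).map Fin.castSucc)
              (fun p' : PJet (r+1) m => p' (a, Pi.single (Fin.last r) 1)) p *
            plift (ppd (a,σ) L) p))) := by
    apply IsDiv_sum
    intro a _
    apply IsDiv_sum
    intro σ _
    apply IsDiv_smul
    exact IsDiv_bracket ((mIdxList σ).map Fin.castSucc)
      (u := fun p' : PJet (r+1) m => p' (a, Pi.single (Fin.last r) 1))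
      (g := plift (ppd (a,σ) L))
      (isPJetFun_coord _) (isPJetFun_plift (isPJetFun_ppd hLjet _))
  refine IsDiv_congr (fun p => ?_) (IsDiv_add hbig (IsDiv_D (Fin.last r) (isPJetFun_plift hLjet)))
  rw [hdbar p, hDlast p, ← Finset.sum_add_distrib]
  apply Finset.sum_congr rfl
  intro a _
  rw [← Finset.sum_add_distrib]
  apply Finset.sum_congr rfl
  intro σ _
  have hlen : (((mIdxList σ).map Fin.castSucc).length) = pdeg σ := by
    rw [List.length_map, length_mIdxList]
  rw [hlen, DLrev_u a σ]
  have hsq : (-1:ℝ)^(pdeg σ) * (-1:ℝ)^(pdeg σ) = 1 := by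
    rw [← pow_add]
    exact Even.neg_one_pow ⟨pdeg σ, rfl⟩
  linear_combination (p (a, Fin.snoc σ 1) * plift (ppd (a,σ) L) p) * hsq

end Scratch

/-- `d̄L` is always a total divergence: `d̄L = Σ_i D_i B^i` for
some finite-order functions `B^i` on the `(r+1)`-parameter jet space. -/
theorem dbar_is_divergence {r m : ℕ} (L : PJet r m → ℝ) (hL : IsPJetFun L) :
    ∃ B : Fin (r + 1) → (PJet (r + 1) m → ℝ),
      (∀ i, IsPJetFun (B i)) ∧
      ∀ p : PJet (r + 1) m, dbar L p = ∑ i : Fin (r + 1), ptotalD i (B i) p := by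
  obtain ⟨B, hB, he⟩ := Scratch.dbar_isDiv hL
  exact ⟨B, hB, he⟩
end

section
/- If a covariant (r+1)-Lagrangian of weight 1 is a coboundary in the complex of variational derivatives, i.e. equals d̄L = x^a_{r+1} F_a(L) for some r-Lagrangian L, then it is of first order: it depends only on the variables x^a and x^a_i (no second or higher derivatives of the path). -/
open scoped BigOperators

variable {r m : ℕ}

/-- The combinatorial coefficient `∏_l (σ_l + β_l)!/σ_l!` appearing in
`D_{σ+β}(t^β x^a_i)|_{t=0}`. -/
def covCoef {r : ℕ} (σ β : PIdx r) : ℕ :=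
  ∏ l, Nat.factorial (σ l + β l) / Nat.factorial (σ l)

/-- Infinitesimal reparametrization covariance of weight `ρ` for an
`r`-Lagrangian: the identity obtained from each vector field
`K = t^τ t^j ∂/∂t^i` vanishing at the origin,
`Σ_σ D_σ(K^i x^a_i)|₀ ∂L/∂x^a_σ = ρ (∂_i K^i)(0) L`. -/
def IsCovariant {r m : ℕ} (ρ : ℝ) (L : PJet r m → ℝ) : Prop :=
  ∀ (i j : Fin r) (τ : PIdx r) (p : PJet r m),
    (∑' σ : PIdx r, ∑ a : Fin m,
      (covCoef σ (τ + Pi.single j 1) : ℝ) * p (a, σ + Pi.single i 1) *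
        ppd (a, σ + (τ + Pi.single j 1)) L p) =
    if τ = 0 ∧ j = i then ρ * L p else 0

/-! ### Basic closure lemmas -/

lemma isPJetFun_const (k : ℝ) : IsPJetFun (fun _ : PJet r m => k) :=
  ⟨0, Fin.elim0, fun _ => k, contDiff_const, fun _ => rfl⟩

lemma isPJetFun_coord (d : Fin m × PIdx r) : IsPJetFun (fun p : PJet r m => p d) :=
  ⟨1, fun _ => d, fun y => y 0, contDiff_apply ℝ ℝ (0 : Fin 1),
    fun _ => rfl⟩

lemma IsPJetFun.add {f g : PJet r m → ℝ} (hf : IsPJetFun f) (hg : IsPJetFun g) :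
    IsPJetFun (fun p => f p + g p) := by
  obtain ⟨N1, c1, F1, hF1, h1⟩ := hf
  obtain ⟨N2, c2, F2, hF2, h2⟩ := hg
  refine ⟨N1 + N2, Fin.append c1 c2,
    fun y => F1 (fun i => y (Fin.castAdd N2 i)) + F2 (fun i => y (Fin.natAdd N1 i)), ?_, ?_⟩
  · exact (hF1.comp (contDiff_pi.2 fun i => contDiff_apply ℝ ℝ (Fin.castAdd N2 i))).add
      (hF2.comp (contDiff_pi.2 fun i => contDiff_apply ℝ ℝ (Fin.natAdd N1 i)))
  · intro p
    simp only [Fin.append_left, Fin.append_right, h1, h2]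

lemma IsPJetFun.mul {f g : PJet r m → ℝ} (hf : IsPJetFun f) (hg : IsPJetFun g) :
    IsPJetFun (fun p => f p * g p) := by
  obtain ⟨N1, c1, F1, hF1, h1⟩ := hf
  obtain ⟨N2, c2, F2, hF2, h2⟩ := hg
  refine ⟨N1 + N2, Fin.append c1 c2,
    fun y => F1 (fun i => y (Fin.castAdd N2 i)) * F2 (fun i => y (Fin.natAdd N1 i)), ?_, ?_⟩
  · exact (hF1.comp (contDiff_pi.2 fun i => contDiff_apply ℝ ℝ (Fin.castAdd N2 i))).mul
      (hF2.comp (contDiff_pi.2 fun i => contDiff_apply ℝ ℝ (Fin.natAdd N1 i)))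
  · intro p
    simp only [Fin.append_left, Fin.append_right, h1, h2]

lemma IsPJetFun.const_mul {f : PJet r m → ℝ} (hf : IsPJetFun f) (k : ℝ) :
    IsPJetFun (fun p => k * f p) := (isPJetFun_const k).mul hf

lemma isPJetFun_finsetSum {ι : Type*} (S : Finset ι) (g : ι → PJet r m → ℝ)
    (hg : ∀ x ∈ S, IsPJetFun (g x)) : IsPJetFun (fun p => ∑ x ∈ S, g x p) := by
  classical
  induction S using Finset.induction_on with
  | empty => simpa using isPJetFun_const (r := r) (m := m) 0
  | @insert a S ha ih =>
    have : (fun p => ∑ x ∈ insert a S, g x p) = fun p => g a p + ∑ x ∈ S, g x p := by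
      funext p; rw [Finset.sum_insert ha]
    rw [this]
    exact (hg a (Finset.mem_insert_self a S)).add
      (ih fun x hx => hg x (Finset.mem_insert_of_mem hx))

/-! ### `ppd` of a represented jet function -/

lemma ppd_rep {N : ℕ} {c : Fin N → Fin m × PIdx r} {F : (Fin N → ℝ) → ℝ}
    (hF : ContDiff ℝ (⊤ : ℕ∞) F) {f : PJet r m → ℝ} (hrep : ∀ p, f p = F (fun i => p (c i)))
    (d : Fin m × PIdx r) (p : PJet r m) :
    ppd d f p = fderiv ℝ F (fun i => p (c i)) (fun i => if c i = d then 1 else 0) := by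
  classical
  have hφ : (fun t => f (Function.update p d t)) =
      fun t => F (fun i => if c i = d then t else p (c i)) := by
    funext t; rw [hrep]; congr 1; funext i; exact Function.update_apply p d t (c i)
  have hu : HasDerivAt (fun t => (fun i => if c i = d then t else p (c i)))
      (fun i => if c i = d then (1 : ℝ) else 0) (p d) := by
    rw [hasDerivAt_pi]
    intro i
    by_cases h : c i = d
    · simp only [h, if_true]; exact hasDerivAt_id' (p d)
    · simp only [h, if_false]; exact hasDerivAt_const _ _
  have hbase : (fun i => if c i = d then p d else p (c i)) = fun i => p (c i) := by
    funext i; by_cases h : c i = d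
    · rw [if_pos h, h]
    · rw [if_neg h]
  have hder := ((hF.differentiable (by simp)) _).hasFDerivAt.comp_hasDerivAt (p d) hu
  rw [hbase] at hder
  unfold ppd
  rw [hφ]
  exact hder.deriv

lemma IsPJetFun.ppd {f : PJet r m → ℝ} (hf : IsPJetFun f) (d : Fin m × PIdx r) :
    IsPJetFun (ppd d f) := by
  classical
  obtain ⟨N, c, F, hF, hrep⟩ := hf
  refine ⟨N, c, fun y => fderiv ℝ F y (fun i => if c i = d then 1 else 0), ?_, ?_⟩
  · exact (hF.fderiv_right (by simp)).clm_apply contDiff_const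
  · intro p; exact ppd_rep hF hrep d p

lemma ppd_eq_zero_of_nmem {N : ℕ} {c : Fin N → Fin m × PIdx r} {F : (Fin N → ℝ) → ℝ}
    {f : PJet r m → ℝ} (hrep : ∀ p, f p = F (fun i => p (c i)))
    {d : Fin m × PIdx r} (hd : ∀ i, c i ≠ d) (p : PJet r m) :
    ppd d f p = 0 := by
  have hφ : (fun t => f (Function.update p d t)) = fun _ => f p := by
    funext t; rw [hrep, hrep]; congr 1; funext i
    exact Function.update_of_ne (hd i) t p
  unfold ppd
  rw [hφ, deriv_const]

/-! ### Closure under total derivatives -/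

lemma ppd_zero_fun (d : Fin m × PIdx r) (p : PJet r m) :
    ppd d (fun _ : PJet r m => (0 : ℝ)) p = 0 := by
  unfold ppd; simp

lemma ptotalD_zero_fun (i : Fin r) :
    ptotalD i (fun _ : PJet r m => (0 : ℝ)) = fun _ => 0 := by
  funext p
  unfold ptotalD
  have : ∀ c : Fin m × PIdx r,
      p (c.1, c.2 + Pi.single i 1) * ppd c (fun _ : PJet r m => (0:ℝ)) p = 0 := by
    intro c; rw [ppd_zero_fun, mul_zero]
  simp only [this, tsum_zero]

lemma IsPJetFun.ptotalD {f : PJet r m → ℝ} (hf : IsPJetFun f) (i : Fin r) :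
    IsPJetFun (_root_.ptotalD i f) := by
  classical
  obtain ⟨N, c, F, hF, hrep⟩ := hf
  have heq : _root_.ptotalD i f = fun p => ∑ d ∈ Finset.univ.image c,
      p (d.1, d.2 + Pi.single i 1) * _root_.ppd d f p := by
    funext p
    refine tsum_eq_sum ?_
    intro d hd
    have : ∀ j, c j ≠ d := by
      intro j hj
      exact hd (Finset.mem_image.2 ⟨j, Finset.mem_univ j, hj⟩)
    rw [ppd_eq_zero_of_nmem hrep this, mul_zero]
  rw [heq]
  have hf' : IsPJetFun f := ⟨N, c, F, hF, hrep⟩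
  exact isPJetFun_finsetSum _ _ fun d _ =>
    (isPJetFun_coord (d.1, d.2 + Pi.single i 1)).mul (hf'.ppd d)

lemma iterate_ptotalD_zero_fun (i : Fin r) (k : ℕ) :
    (ptotalD i)^[k] (fun _ : PJet r m => (0 : ℝ)) = fun _ => 0 := by
  induction k with
  | zero => rfl
  | succ k ih => rw [Function.iterate_succ_apply, ptotalD_zero_fun, ih]

lemma IsPJetFun.iterate_ptotalD {f : PJet r m → ℝ} (hf : IsPJetFun f) (i : Fin r) (k : ℕ) :
    IsPJetFun ((_root_.ptotalD i)^[k] f) := by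
  induction k with
  | zero => exact hf
  | succ k ih => rw [Function.iterate_succ_apply']; exact ih.ptotalD i

lemma pDmulti_zero_fun (σ : PIdx r) :
    pDmulti σ (fun _ : PJet r m => (0 : ℝ)) = fun _ => 0 := by
  unfold _root_.pDmulti
  induction (List.finRange r) with
  | nil => rfl
  | cons a l ih => rw [List.foldr_cons, ih, iterate_ptotalD_zero_fun]

lemma IsPJetFun.pDmulti {f : PJet r m → ℝ} (hf : IsPJetFun f) (σ : PIdx r) :
    IsPJetFun (_root_.pDmulti σ f) := by
  unfold _root_.pDmulti
  induction (List.finRange r) with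
  | nil => exact hf
  | cons a l ih => rw [List.foldr_cons]; exact ih.iterate_ptotalD a (σ a)

lemma IsPJetFun.varder {L : PJet r m → ℝ} (hL : IsPJetFun L) (a : Fin m) :
    IsPJetFun (_root_.varder a L) := by
  classical
  obtain ⟨N, c, F, hF, hrep⟩ := hL
  have heq : _root_.varder a L = fun p => ∑ σ ∈ Finset.univ.image (fun i => (c i).2),
      (-1 : ℝ) ^ pdeg σ * _root_.pDmulti σ (_root_.ppd (a, σ) L) p := by
    funext p
    refine tsum_eq_sum ?_
    intro σ hσ
    have hnm : ∀ i, c i ≠ (a, σ) := by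
      intro i hi
      exact hσ (Finset.mem_image.2 ⟨i, Finset.mem_univ i, by rw [hi]⟩)
    have h0 : _root_.ppd (a, σ) L = fun _ => 0 :=
      funext fun q => ppd_eq_zero_of_nmem hrep hnm q
    rw [h0, pDmulti_zero_fun, mul_zero]
  rw [heq]
  have hL' : IsPJetFun L := ⟨N, c, F, hF, hrep⟩
  exact isPJetFun_finsetSum _ _ fun σ _ =>
    ((hL'.ppd (a, σ)).pDmulti σ).const_mul _
/-! ### A jet function with vanishing high partials is first order -/

lemma ppd_update_eq (f : PJet r m → ℝ) (d : Fin m × PIdx r) (x : PJet r m) (t : ℝ) :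
    ppd d f (Function.update x d t) = deriv (fun s => f (Function.update x d s)) t := by
  unfold ppd
  rw [Function.update_self]
  congr 1
  funext s
  rw [Function.update_idem]

lemma update_const_of_ppd_zero {f : PJet r m → ℝ} (hf : IsPJetFun f)
    (d : Fin m × PIdx r) (hz : ∀ x, ppd d f x = 0) (x : PJet r m) (v : ℝ) :
    f (Function.update x d v) = f x := by
  classical
  obtain ⟨N, c, F, hF, hrep⟩ := hf
  set φ : ℝ → ℝ := fun t => f (Function.update x d t) with hφdef
  have hφeq : φ = fun t => F (fun i => if c i = d then t else x (c i)) := by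
    funext t; show f _ = _; rw [hrep]; congr 1; funext i
    exact Function.update_apply x d t (c i)
  have hdiff : Differentiable ℝ φ := by
    rw [hφeq]
    refine (hF.differentiable (by simp)).comp ?_
    refine differentiable_pi.2 fun i => ?_
    by_cases h : c i = d
    · simp only [h, if_true]; exact differentiable_id
    · simp only [h, if_false]; exact differentiable_const _
  have hder : ∀ t, deriv φ t = 0 := by
    intro t
    rw [hφdef]
    rw [← ppd_update_eq f d x t]
    exact hz _
  have := is_const_of_deriv_eq_zero hdiff hder v (x d)
  rw [hφdef] at this
  simpa [Function.update_eq_self] using this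

lemma first_order_of_ppd_zero {f : PJet r m → ℝ} (hf : IsPJetFun f)
    (hz : ∀ d : Fin m × PIdx r, 2 ≤ pdeg d.2 → ∀ x, ppd d f x = 0)
    (x y : PJet r m) (hxy : ∀ d : Fin m × PIdx r, pdeg d.2 ≤ 1 → x d = y d) :
    f x = f y := by
  classical
  obtain ⟨N, c, F, hF, hrep⟩ := hf
  have step : ∀ S : Finset (Fin m × PIdx r), (∀ d ∈ S, 2 ≤ pdeg d.2) →
      f (fun e => if e ∈ S then y e else x e) = f x := by
    intro S
    induction S using Finset.induction_on with
    | empty => intro _; simp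
    | @insert a S ha ih =>
      intro hS
      have hset : (fun e => if e ∈ insert a S then y e else x e) =
          Function.update (fun e => if e ∈ S then y e else x e) a (y a) := by
        funext e
        by_cases he : e = a
        · subst he; simp [Function.update_self]
        · rw [Function.update_of_ne he]
          simp [Finset.mem_insert, he]
      rw [hset, update_const_of_ppd_zero ⟨N, c, F, hF, hrep⟩ a
        (hz a (hS a (Finset.mem_insert_self a S))),
        ih fun d hd => hS d (Finset.mem_insert_of_mem hd)]
  set S : Finset (Fin m × PIdx r) :=
    (Finset.univ.image c).filter (fun d => 2 ≤ pdeg d.2) with hSdef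
  have h1 : f (fun e => if e ∈ S then y e else x e) = f x :=
    step S fun d hd => (Finset.mem_filter.1 hd).2
  have h2 : f (fun e => if e ∈ S then y e else x e) = f y := by
    rw [hrep, hrep]
    congr 1
    funext i
    by_cases hi : c i ∈ S
    · rw [if_pos hi]
    · rw [if_neg hi]
      have hmem : c i ∈ Finset.univ.image c :=
        Finset.mem_image.2 ⟨i, Finset.mem_univ i, rfl⟩
      have hdeg : ¬ 2 ≤ pdeg (c i).2 := by
        intro h
        exact hi (Finset.mem_filter.2 ⟨hmem, h⟩)
      exact hxy (c i) (by omega)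
  rw [← h1, h2]
/-! ### Multi-index helper lemmas -/

lemma snoc_add (μ ν : PIdx r) (a b : ℕ) :
    (Fin.snoc μ a : PIdx (r+1)) + Fin.snoc ν b = Fin.snoc (μ + ν) (a + b) := by
  funext l
  refine Fin.lastCases ?_ ?_ l
  · simp [Fin.snoc_last]
  · intro k; simp [Fin.snoc_castSucc]

lemma snoc_injective {μ ν : PIdx r} {a : ℕ} (h : (Fin.snoc μ a : PIdx (r+1)) = Fin.snoc ν a) :
    μ = ν := by
  funext l
  have := congrFun h (Fin.castSucc l)
  simpa [Fin.snoc_castSucc] using this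

lemma single_last_eq_snoc :
    (Pi.single (Fin.last r) 1 : PIdx (r+1)) = Fin.snoc (0 : PIdx r) 1 := by
  funext l
  refine Fin.lastCases ?_ ?_ l
  · simp [Fin.snoc_last, Pi.single_eq_same]
  · intro k
    rw [Fin.snoc_castSucc, Pi.single_eq_of_ne (Fin.castSucc_lt_last k).ne]
    rfl

lemma single_castSucc_eq_snoc (j : Fin r) :
    (Pi.single (Fin.castSucc j) 1 : PIdx (r+1)) = Fin.snoc (Pi.single j 1 : PIdx r) 0 := by
  funext l
  refine Fin.lastCases ?_ ?_ l
  · rw [Fin.snoc_last, Pi.single_eq_of_ne (Fin.castSucc_lt_last j).ne']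
  · intro k
    rw [Fin.snoc_castSucc, Pi.single_apply, Pi.single_apply]
    simp [Fin.castSucc_inj]

lemma pdeg_snoc (ν : PIdx r) : pdeg (Fin.snoc ν 0 : PIdx (r+1)) = pdeg ν := by
  unfold pdeg
  rw [Fin.sum_univ_castSucc]
  simp [Fin.snoc_castSucc, Fin.snoc_last]

lemma pdeg_add (μ ν : PIdx r) : pdeg (μ + ν) = pdeg μ + pdeg ν := by
  unfold pdeg
  simpa using Finset.sum_add_distrib

lemma pdeg_single (j : Fin r) : pdeg (Pi.single j 1 : PIdx r) = 1 := by
  unfold pdeg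
  simp [Pi.single_apply]

lemma covCoef_single (σ : PIdx r) (j : Fin r) :
    covCoef σ (Pi.single j 1) = σ j + 1 := by
  unfold covCoef
  rw [Fintype.prod_eq_single j]
  · rw [Pi.single_eq_same, Nat.factorial_succ, Nat.mul_div_cancel _ (Nat.factorial_pos _)]
  · intro l hl
    rw [Pi.single_eq_of_ne hl, Nat.add_zero, Nat.div_self (Nat.factorial_pos _)]
/-! ### The special evaluation point -/

noncomputable def specialP (x : PJet r m) (b0 a0 : Fin m) (σ0 : PIdx r) (s : ℝ) :
    PJet (r+1) m := fun d =>
  if d.2 (Fin.last r) = 0 then x (d.1, fun l => d.2 (Fin.castSucc l))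
  else if d = (b0, Pi.single (Fin.last r) 1) then 1
  else if d = (a0, Fin.snoc σ0 1) then s else 0

variable {x : PJet r m} {b0 a0 : Fin m} {σ0 : PIdx r} {s : ℝ}

lemma specialP_snoc0 (c : Fin m) (ν : PIdx r) :
    specialP x b0 a0 σ0 s (c, Fin.snoc ν 0) = x (c, ν) := by
  have h0 : (Fin.snoc ν 0 : PIdx (r+1)) (Fin.last r) = 0 := Fin.snoc_last _ _
  have h1 : (fun l => (Fin.snoc ν 0 : PIdx (r+1)) (Fin.castSucc l)) = ν :=
    funext fun l => Fin.snoc_castSucc _ _ l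
  unfold specialP
  rw [if_pos h0, h1]

lemma single_last_ne_snoc1 (hσ0 : σ0 ≠ 0) :
    (Pi.single (Fin.last r) 1 : PIdx (r+1)) ≠ Fin.snoc σ0 1 := by
  intro h
  apply hσ0
  rw [single_last_eq_snoc] at h
  exact (snoc_injective h).symm

lemma specialP_elast (hσ0 : σ0 ≠ 0) (b : Fin m) :
    specialP x b0 a0 σ0 s (b, Pi.single (Fin.last r) 1) = if b = b0 then 1 else 0 := by
  have h1 : (Pi.single (Fin.last r) 1 : PIdx (r+1)) (Fin.last r) = 1 := Pi.single_eq_same _ _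
  unfold specialP
  rw [if_neg (by simp [h1])]
  by_cases hb : b = b0
  · subst hb; rw [if_pos rfl, if_pos rfl]
  · rw [if_neg (by simp [hb]), if_neg (by simp [single_last_ne_snoc1 hσ0]), if_neg hb]

lemma specialP_snoc1 (hσ0 : σ0 ≠ 0) (a : Fin m) :
    specialP x b0 a0 σ0 s (a, Fin.snoc σ0 1) = if a = a0 then s else 0 := by
  have h1 : (Fin.snoc σ0 1 : PIdx (r+1)) (Fin.last r) = 1 := Fin.snoc_last _ _
  unfold specialP
  rw [if_neg (by simp [h1])]
  rw [if_neg (by simp [(single_last_ne_snoc1 hσ0).symm])]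
  by_cases ha : a = a0
  · subst ha; rw [if_pos rfl, if_pos rfl]
  · rw [if_neg (by simp [ha]), if_neg ha]

lemma specialP_other (hσ0 : σ0 ≠ 0) {σ : PIdx (r+1)} (h1 : σ ≠ 0)
    (h2 : σ ≠ Fin.snoc σ0 0) (a : Fin m) :
    specialP x b0 a0 σ0 s (a, σ + Pi.single (Fin.last r) 1) = 0 := by
  have hlast : (σ + Pi.single (Fin.last r) 1 : PIdx (r+1)) (Fin.last r) ≠ 0 := by
    simp [Pi.single_eq_same]
  have hne1 : σ + (Pi.single (Fin.last r) 1 : PIdx (r+1)) ≠ Pi.single (Fin.last r) 1 := by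
    intro h
    apply h1
    funext l
    have := congrFun h l
    simpa using this
  have hne2 : σ + (Pi.single (Fin.last r) 1 : PIdx (r+1)) ≠ Fin.snoc σ0 1 := by
    intro h
    apply h2
    have hs : (Fin.snoc σ0 1 : PIdx (r+1)) = Fin.snoc σ0 0 + Pi.single (Fin.last r) 1 := by
      rw [single_last_eq_snoc, snoc_add, add_zero]
    rw [hs] at h
    funext l
    have := congrFun h l
    simpa using this
  unfold specialP
  rw [if_neg hlast, if_neg (by simp [hne1]), if_neg (by simp [hne2])]
/-! ### Derivatives of `dbar L` at the special point -/

lemma dbar_update_specialP (L : PJet r m → ℝ) (hσ0 : σ0 ≠ 0) (a : Fin m) (ν : PIdx r)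
    (t : ℝ) :
    dbar L (Function.update (specialP x b0 a0 σ0 s) (a, Fin.snoc ν 0) t) =
      varder b0 L (Function.update x (a, ν) t) := by
  classical
  set Q := Function.update (specialP x b0 a0 σ0 s) (a, Fin.snoc ν 0) t with hQ
  have h1 : ∀ b : Fin m, Q (b, Pi.single (Fin.last r) 1) = if b = b0 then 1 else 0 := by
    intro b
    rw [hQ, Function.update_of_ne, specialP_elast hσ0]
    intro h
    have := congrFun (congrArg Prod.snd h) (Fin.last r)
    simp [Pi.single_eq_same, Fin.snoc_last] at this
  have h2 : (fun c : Fin m × PIdx r => Q (c.1, Fin.snoc c.2 0)) =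
      Function.update x (a, ν) t := by
    funext c
    rw [hQ, Function.update_apply, Function.update_apply]
    by_cases hc : c = (a, ν)
    · rw [hc, if_pos rfl, if_pos rfl]
    · have hne : (c.1, (Fin.snoc c.2 0 : PIdx (r+1))) ≠ (a, Fin.snoc ν 0) := by
        intro h
        apply hc
        have ha : c.1 = a := congrArg Prod.fst h
        have hb : c.2 = ν := snoc_injective (congrArg Prod.snd h)
        rw [← ha, ← hb]
      rw [if_neg hne, if_neg hc, specialP_snoc0]
  unfold dbar plift
  simp only [h1, h2]
  rw [Finset.sum_congr rfl (fun b _ => by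
    rw [ite_mul, one_mul, zero_mul] :
    ∀ b ∈ Finset.univ, _ = if b = b0 then varder b L (Function.update x (a, ν) t) else 0)]
  simp [Finset.sum_ite_eq']

lemma ppd_dbar_specialP (L : PJet r m → ℝ) (hσ0 : σ0 ≠ 0) (a : Fin m) (ν : PIdx r) :
    ppd (a, Fin.snoc ν 0) (dbar L) (specialP x b0 a0 σ0 s) =
      ppd (a, ν) (varder b0 L) x := by
  unfold ppd
  have h1 : (fun t => dbar L (Function.update (specialP x b0 a0 σ0 s) (a, Fin.snoc ν 0) t))
      = fun t => varder b0 L (Function.update x (a, ν) t) :=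
    funext fun t => dbar_update_specialP L hσ0 a ν t
  rw [h1, specialP_snoc0]
/-! ### The key vanishing lemma -/

lemma key_vanish (L : PJet r m → ℝ) (hcov : IsCovariant 1 (dbar L))
    (b0 a0 : Fin m) (ν0 : PIdx r) (hν : 2 ≤ pdeg ν0) (x : PJet r m) :
    ppd (a0, ν0) (varder b0 L) x = 0 := by
  classical
  -- choose a direction present in ν0
  have hex : ∃ j, ν0 j ≠ 0 := by
    by_contra h
    push_neg at h
    have : pdeg ν0 = 0 := by unfold pdeg; simp [h]
    omega
  obtain ⟨j, hj⟩ := hex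
  set σ0 : PIdx r := ν0 - Pi.single j 1 with hσ0def
  have hσν : σ0 + Pi.single j 1 = ν0 := by
    funext l
    by_cases hl : l = j
    · subst hl
      simp only [Pi.add_apply, Pi.sub_apply, hσ0def, Pi.single_eq_same]
      omega
    · simp only [Pi.add_apply, Pi.sub_apply, hσ0def, Pi.single_eq_of_ne hl]
      omega
  have hσ0ne : σ0 ≠ 0 := by
    intro h
    rw [h, zero_add] at hσν
    have : pdeg ν0 = 1 := by rw [← hσν, pdeg_single]
    omega
  set jj : Fin (r+1) := Fin.castSucc j with hjjdef
  have hβ : (Pi.single jj 1 : PIdx (r+1)) = Fin.snoc (Pi.single j 1 : PIdx r) 0 :=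
    single_castSucc_eq_snoc j
  -- the two relevant multi-indices
  have hzs : (0 : PIdx (r+1)) ≠ Fin.snoc σ0 0 := by
    intro h
    apply hσ0ne
    have : (Fin.snoc (0 : PIdx r) 0 : PIdx (r+1)) = Fin.snoc σ0 0 := by
      rw [← h]; funext l; refine Fin.lastCases ?_ ?_ l
      · simp [Fin.snoc_last]
      · intro k; simp [Fin.snoc_castSucc]
    exact (snoc_injective this).symm
  have hid : ∀ s : ℝ,
      (covCoef 0 (Pi.single jj 1) : ℝ) *
          ppd (b0, Pi.single j 1) (varder b0 L) x +
        (covCoef (Fin.snoc σ0 0) (Pi.single jj 1) : ℝ) *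
          (s * ppd (a0, ν0) (varder b0 L) x) = 0 := by
    intro s
    have H := hcov (Fin.last r) jj 0 (specialP x b0 a0 σ0 s)
    rw [if_neg (by
      rintro ⟨-, h⟩
      exact (Fin.castSucc_lt_last j).ne (hjjdef ▸ h))] at H
    rw [tsum_eq_sum (s := ({0, Fin.snoc σ0 0} : Finset (PIdx (r+1)))) ?hsupp] at H
    · rw [Finset.sum_pair hzs] at H
      have hterm0 : (∑ a : Fin m, (covCoef 0 (0 + Pi.single jj 1) : ℝ) *
          specialP x b0 a0 σ0 s (a, 0 + Pi.single (Fin.last r) 1) *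
          ppd (a, 0 + (0 + Pi.single jj 1)) (dbar L) (specialP x b0 a0 σ0 s)) =
          (covCoef 0 (Pi.single jj 1) : ℝ) *
            ppd (b0, Pi.single j 1) (varder b0 L) x := by
        have : ∀ a : Fin m, (covCoef 0 (0 + Pi.single jj 1) : ℝ) *
            specialP x b0 a0 σ0 s (a, 0 + Pi.single (Fin.last r) 1) *
            ppd (a, 0 + (0 + Pi.single jj 1)) (dbar L) (specialP x b0 a0 σ0 s) =
            if a = b0 then (covCoef 0 (Pi.single jj 1) : ℝ) *
              ppd (a, Pi.single j 1) (varder b0 L) x else 0 := by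
          intro a
          rw [zero_add, zero_add, zero_add, specialP_elast hσ0ne, hβ,
            ppd_dbar_specialP L hσ0ne]
          by_cases ha : a = b0
          · rw [if_pos ha, if_pos ha, mul_one]
          · rw [if_neg ha, if_neg ha, mul_zero, zero_mul]
        rw [Finset.sum_congr rfl fun a _ => this a]
        simp [Finset.sum_ite_eq']
      have htermσ : (∑ a : Fin m, (covCoef (Fin.snoc σ0 0) (0 + Pi.single jj 1) : ℝ) *
          specialP x b0 a0 σ0 s (a, Fin.snoc σ0 0 + Pi.single (Fin.last r) 1) *
          ppd (a, Fin.snoc σ0 0 + (0 + Pi.single jj 1)) (dbar L) (specialP x b0 a0 σ0 s)) =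
          (covCoef (Fin.snoc σ0 0) (Pi.single jj 1) : ℝ) *
            (s * ppd (a0, ν0) (varder b0 L) x) := by
        have he1 : Fin.snoc σ0 0 + (Pi.single (Fin.last r) 1 : PIdx (r+1)) =
            Fin.snoc σ0 1 := by
          rw [single_last_eq_snoc, snoc_add, add_zero, zero_add]
        have he2 : Fin.snoc σ0 0 + (Pi.single jj 1 : PIdx (r+1)) =
            Fin.snoc ν0 0 := by
          rw [hβ, snoc_add, add_zero, hσν]
        have : ∀ a : Fin m, (covCoef (Fin.snoc σ0 0) (0 + Pi.single jj 1) : ℝ) *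
            specialP x b0 a0 σ0 s (a, Fin.snoc σ0 0 + Pi.single (Fin.last r) 1) *
            ppd (a, Fin.snoc σ0 0 + (0 + Pi.single jj 1)) (dbar L) (specialP x b0 a0 σ0 s) =
            if a = a0 then (covCoef (Fin.snoc σ0 0) (Pi.single jj 1) : ℝ) *
              (s * ppd (a0, ν0) (varder b0 L) x) else 0 := by
          intro a
          rw [zero_add, he1, specialP_snoc1 hσ0ne, he2, ppd_dbar_specialP L hσ0ne]
          by_cases ha : a = a0
          · rw [if_pos ha, if_pos ha, ha, mul_assoc]
          · rw [if_neg ha, if_neg ha, mul_zero, zero_mul]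
        rw [Finset.sum_congr rfl fun a _ => this a]
        simp [Finset.sum_ite_eq']
      rw [hterm0, htermσ] at H
      exact H
    · intro σ hσ
      have h1 : σ ≠ 0 := by
        intro h; exact (by simp [h] : σ ∈ ({0, Fin.snoc σ0 0} : Finset (PIdx (r+1)))) |> hσ
      have h2 : σ ≠ Fin.snoc σ0 0 := by
        intro h; exact (by simp [h] : σ ∈ ({0, Fin.snoc σ0 0} : Finset (PIdx (r+1)))) |> hσ
      refine Finset.sum_eq_zero fun a _ => ?_
      rw [zero_add, specialP_other hσ0ne h1 h2, mul_zero, zero_mul]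
  have h0 := hid 0
  have h1 := hid 1
  rw [zero_mul, mul_zero, add_zero] at h0
  rw [one_mul, h0, zero_add] at h1
  have hC : (covCoef (Fin.snoc σ0 0) (Pi.single jj 1) : ℝ) ≠ 0 := by
    rw [covCoef_single]
    exact Nat.cast_ne_zero.2 (Nat.succ_ne_zero _)
  exact (mul_eq_zero.1 h1).resolve_left hC

/-- a coboundary `d̄L` in the complex of variational derivatives
which is a covariant Lagrangian of weight 1 must be of first order: it depends
only on the variables `x^a` and `x^a_i`. -/
theorem covariant_coboundary_first_order {r m : ℕ} (L : PJet r m → ℝ)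
    (hL : IsPJetFun L) (hcov : IsCovariant 1 (dbar L)) :
    ∀ p q : PJet (r + 1) m,
      (∀ (a : Fin m) (σ : PIdx (r + 1)), pdeg σ ≤ 1 → p (a, σ) = q (a, σ)) →
      dbar L p = dbar L q := by
  intro p q hpq
  unfold dbar
  refine Finset.sum_congr rfl fun a _ => ?_
  have h1 : p (a, Pi.single (Fin.last r) 1) = q (a, Pi.single (Fin.last r) 1) :=
    hpq a _ (by rw [pdeg_single])
  have h2 : plift (fun z => varder a L z) p = plift (fun z => varder a L z) q := by
    unfold plift
    refine first_order_of_ppd_zero (hL.varder a) ?_ _ _ ?_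
    · intro d hd z
      have := key_vanish L hcov a d.1 d.2 hd z
      simpa using this
    · intro d hd
      exact hpq d.1 (Fin.snoc d.2 0) (by rw [pdeg_snoc]; exact hd)
  rw [h1, h2]
end
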